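/- Let M be an MHT model of {L_φ} ∪ η(φ) of length λ ≥ 1 and let m be its associated three-valued interpretation. Then for every formula μ in the closure cl(φ) and every k < λ, the label atom agrees with the formula: m(k, L_μ) = m(k, μ). -/
import Mathlib


open scoped Classical ENat

/-- Interval `[a, b]` with `a : ℕ` and `b : ℕ∞` (possibly `ω = ⊤`). -/
abbrev Ivl : Type := ℕ × ℕ∞

/-- Membership `x ∈ [a, b]`. -/
def memI (I : Ivl) (x : ℕ) : Prop := I.1 ≤ x ∧ (x : ℕ∞) ≤ I.2

/-- Metric temporal formulas over alphabet `A`.  Non-metric operators are the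
metric ones with interval `(0, ⊤)`, i.e. `[0, ω]`. -/
inductive MF (A : Type) : Type
  | bot
  | atom (a : A)
  | and (φ ψ : MF A)
  | or (φ ψ : MF A)
  | imp (φ ψ : MF A)
  | prev (I : Ivl) (φ : MF A)      -- ●_I
  | wprev (I : Ivl) (φ : MF A)     -- ●̂_I (weak previous)
  | next (I : Ivl) (φ : MF A)      -- ○_I
  | wnext (I : Ivl) (φ : MF A)     -- ◯̂_I (weak next)
  | since (I : Ivl) (φ ψ : MF A)   -- φ S_I ψ
  | trigger (I : Ivl) (φ ψ : MF A) -- φ T_I ψ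
  | until_ (I : Ivl) (φ ψ : MF A)  -- φ U_I ψ
  | release (I : Ivl) (φ ψ : MF A) -- φ R_I ψ

namespace MF
def top {A : Type} : MF A := imp bot bot
def neg {A : Type} (φ : MF A) : MF A := imp φ bot
/-- `□ φ := ⊥ R_{[0,ω]} φ`. -/
def always {A : Type} (φ : MF A) : MF A := release (0, ⊤) bot φ
/-- `◇ φ := ⊤ U_{[0,ω]} φ`. -/
def evtl {A : Type} (φ : MF A) : MF A := until_ (0, ⊤) top φ
/-- `F := ¬ ○_{[0,ω]} ⊤` (final). -/
def final {A : Type} : MF A := neg (next (0, ⊤) top)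
/-- `I := ¬ ●_{[0,ω]} ⊤` (initial). -/
def initial {A : Type} : MF A := neg (prev (0, ⊤) top)
end MF

/-- Timed HT-trace of length `lam ∈ ℕ ∪ {ω}` over alphabet `A`. -/
structure TimedTrace (A : Type) where
  lam : ℕ∞
  H : ℕ → Set A
  T : ℕ → Set A
  tau : ℕ → ℕ
  sub : ∀ i : ℕ, (i : ℕ∞) < lam → H i ⊆ T i
  mono : ∀ i : ℕ, ((i + 1 : ℕ) : ℕ∞) < lam → tau i ≤ tau (i + 1)
  zero : tau 0 = 0

/-- Strictness: `τ(i) < τ(i+1)` for all consecutive indices in the domain. -/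
def TimedTrace.strict {A : Type} (M : TimedTrace A) : Prop :=
  ∀ i : ℕ, ((i + 1 : ℕ) : ℕ∞) < M.lam → M.tau i < M.tau (i + 1)

/-- The total trace `(T, T)` associated with `(H, T)`. -/
def TimedTrace.tot {A : Type} (M : TimedTrace A) : TimedTrace A :=
  { M with H := M.T, sub := fun _ _ => subset_rfl }

/-- MHT satisfaction `M, k ⊨ φ`. -/
def sat {A : Type} : TimedTrace A → ℕ → MF A → Prop
  | _, _, .bot => False
  | M, k, .atom a => a ∈ M.H k
  | M, k, .and φ ψ => sat M k φ ∧ sat M k ψ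
  | M, k, .or φ ψ => sat M k φ ∨ sat M k ψ
  | M, k, .imp φ ψ =>
      (sat M k φ → sat M k ψ) ∧ (sat M.tot k φ → sat M.tot k ψ)
  | M, k, .prev I φ =>
      0 < k ∧ sat M (k - 1) φ ∧ memI I (M.tau k - M.tau (k - 1))
  | M, k, .wprev I φ =>
      k = 0 ∨ sat M (k - 1) φ ∨ ¬ memI I (M.tau k - M.tau (k - 1))
  | M, k, .next I φ =>
      ((k + 1 : ℕ) : ℕ∞) < M.lam ∧ sat M (k + 1) φ ∧ memI I (M.tau (k + 1) - M.tau k)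
  | M, k, .wnext I φ =>
      ((k + 1 : ℕ) : ℕ∞) = M.lam ∨ sat M (k + 1) φ ∨ ¬ memI I (M.tau (k + 1) - M.tau k)
  | M, k, .since I φ ψ =>
      ∃ j : ℕ, j ≤ k ∧ memI I (M.tau k - M.tau j) ∧ sat M j ψ ∧
        ∀ i : ℕ, j < i → i ≤ k → sat M i φ
  | M, k, .trigger I φ ψ =>
      ∀ j : ℕ, j ≤ k → memI I (M.tau k - M.tau j) →
        sat M j ψ ∨ ∃ i : ℕ, j < i ∧ i ≤ k ∧ sat M i φ
  | M, k, .until_ I φ ψ =>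
      ∃ j : ℕ, k ≤ j ∧ ((j : ℕ) : ℕ∞) < M.lam ∧ memI I (M.tau j - M.tau k) ∧ sat M j ψ ∧
        ∀ i : ℕ, k ≤ i → i < j → sat M i φ
  | M, k, .release I φ ψ =>
      ∀ j : ℕ, k ≤ j → ((j : ℕ) : ℕ∞) < M.lam → memI I (M.tau j - M.tau k) →
        sat M j ψ ∨ ∃ i : ℕ, k ≤ i ∧ i < j ∧ sat M i φ

/-- The three-valued (Gödel) valuation associated with a timed HT-trace:
`0` (false), `1` (true there only), `2` (true here).  `sSup ∅ = 0` in `ℕ`, and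
the `insert 2` realizes `inf ∅ = 2` (all values are `≤ 2`). -/
noncomputable def mval {A : Type} (M : TimedTrace A) : MF A → ℕ → ℕ
  | .bot, _ => 0
  | .atom a, k => if a ∈ M.H k then 2 else if a ∈ M.T k then 1 else 0
  | .and φ ψ, k => min (mval M φ k) (mval M ψ k)
  | .or φ ψ, k => max (mval M φ k) (mval M ψ k)
  | .imp φ ψ, k => if mval M φ k ≤ mval M ψ k then 2 else mval M ψ k
  | .prev I φ, k =>
      if 0 < k ∧ memI I (M.tau k - M.tau (k - 1)) then mval M φ (k - 1) else 0
  | .wprev I φ, k =>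
      if k = 0 ∨ ¬ memI I (M.tau k - M.tau (k - 1)) then 2 else mval M φ (k - 1)
  | .next I φ, k =>
      if ((k + 1 : ℕ) : ℕ∞) < M.lam ∧ memI I (M.tau (k + 1) - M.tau k) then
        mval M φ (k + 1) else 0
  | .wnext I φ, k =>
      if ((k + 1 : ℕ) : ℕ∞) = M.lam ∨ ¬ memI I (M.tau (k + 1) - M.tau k) then 2
      else mval M φ (k + 1)
  | .since I φ ψ, k =>
      sSup {v : ℕ | ∃ j : ℕ, j ≤ k ∧ memI I (M.tau k - M.tau j) ∧
        v = min (mval M ψ j)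
          (sInf (insert 2 {w : ℕ | ∃ i : ℕ, j < i ∧ i ≤ k ∧ w = mval M φ i}))}
  | .trigger I φ ψ, k =>
      sInf (insert 2 {v : ℕ | ∃ j : ℕ, j ≤ k ∧ memI I (M.tau k - M.tau j) ∧
        v = max (mval M ψ j)
          (sSup {w : ℕ | ∃ i : ℕ, j < i ∧ i ≤ k ∧ w = mval M φ i})})
  | .until_ I φ ψ, k =>
      sSup {v : ℕ | ∃ j : ℕ, k ≤ j ∧ ((j : ℕ) : ℕ∞) < M.lam ∧
        memI I (M.tau j - M.tau k) ∧
        v = min (mval M ψ j)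
          (sInf (insert 2 {w : ℕ | ∃ i : ℕ, k ≤ i ∧ i < j ∧ w = mval M φ i}))}
  | .release I φ ψ, k =>
      sInf (insert 2 {v : ℕ | ∃ j : ℕ, k ≤ j ∧ ((j : ℕ) : ℕ∞) < M.lam ∧
        memI I (M.tau j - M.tau k) ∧
        v = max (mval M ψ j)
          (sSup {w : ℕ | ∃ i : ℕ, k ≤ i ∧ i < j ∧ w = mval M φ i})})

/-- Finite disjunction `⋁`, with empty disjunction `⊥`. -/
def bigOr {A : Type} : List (MF A) → MF A
  | [] => MF.bot
  | χ :: l => MF.or χ (bigOr l)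

/-- Finite conjunction `⋀`, with empty conjunction `⊤`. -/
def bigAnd {A : Type} : List (MF A) → MF A
  | [] => MF.top
  | χ :: l => MF.and χ (bigAnd l)

/-- The closure `cl(φ)`: the smallest set containing `φ`, closed under
subformulas, and closed under the recursive unfoldings of the binary metric
operators with intervals `[0,n]`. -/
inductive Cl {A : Type} (φ : MF A) : MF A → Prop
  | self : Cl φ φ
  | and₁ {ψ χ} : Cl φ (.and ψ χ) → Cl φ ψ
  | and₂ {ψ χ} : Cl φ (.and ψ χ) → Cl φ χ
  | or₁ {ψ χ} : Cl φ (.or ψ χ) → Cl φ ψ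
  | or₂ {ψ χ} : Cl φ (.or ψ χ) → Cl φ χ
  | imp₁ {ψ χ} : Cl φ (.imp ψ χ) → Cl φ ψ
  | imp₂ {ψ χ} : Cl φ (.imp ψ χ) → Cl φ χ
  | prev {I ψ} : Cl φ (.prev I ψ) → Cl φ ψ
  | wprev {I ψ} : Cl φ (.wprev I ψ) → Cl φ ψ
  | next {I ψ} : Cl φ (.next I ψ) → Cl φ ψ
  | wnext {I ψ} : Cl φ (.wnext I ψ) → Cl φ ψ
  | since₁ {I ψ χ} : Cl φ (.since I ψ χ) → Cl φ ψ
  | since₂ {I ψ χ} : Cl φ (.since I ψ χ) → Cl φ χ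
  | trigger₁ {I ψ χ} : Cl φ (.trigger I ψ χ) → Cl φ ψ
  | trigger₂ {I ψ χ} : Cl φ (.trigger I ψ χ) → Cl φ χ
  | until₁ {I ψ χ} : Cl φ (.until_ I ψ χ) → Cl φ ψ
  | until₂ {I ψ χ} : Cl φ (.until_ I ψ χ) → Cl φ χ
  | release₁ {I ψ χ} : Cl φ (.release I ψ χ) → Cl φ ψ
  | release₂ {I ψ χ} : Cl φ (.release I ψ χ) → Cl φ χ
  | until_unfold {n : ℕ} {ψ χ} {i : ℕ} :
      Cl φ (.until_ (0, (n : ℕ∞)) ψ χ) → 1 ≤ i → i ≤ n →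
      Cl φ (.next (i, (i : ℕ∞)) (.until_ (0, ((n - i : ℕ) : ℕ∞)) ψ χ))
  | release_unfold {n : ℕ} {ψ χ} {i : ℕ} :
      Cl φ (.release (0, (n : ℕ∞)) ψ χ) → 1 ≤ i → i ≤ n →
      Cl φ (.wnext (i, (i : ℕ∞)) (.release (0, ((n - i : ℕ) : ℕ∞)) ψ χ))
  | since_unfold {n : ℕ} {ψ χ} {i : ℕ} :
      Cl φ (.since (0, (n : ℕ∞)) ψ χ) → 1 ≤ i → i ≤ n →
      Cl φ (.prev (i, (i : ℕ∞)) (.since (0, ((n - i : ℕ) : ℕ∞)) ψ χ))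
  | trigger_unfold {n : ℕ} {ψ χ} {i : ℕ} :
      Cl φ (.trigger (0, (n : ℕ∞)) ψ χ) → 1 ≤ i → i ≤ n →
      Cl φ (.wprev (i, (i : ℕ∞)) (.trigger (0, ((n - i : ℕ) : ℕ∞)) ψ χ))

/-- Size (number of symbols) of a formula. -/
def fsize {A : Type} : MF A → ℕ
  | .bot => 1
  | .atom _ => 1
  | .and ψ χ => 1 + fsize ψ + fsize χ
  | .or ψ χ => 1 + fsize ψ + fsize χ
  | .imp ψ χ => 1 + fsize ψ + fsize χ
  | .prev _ ψ => 1 + fsize ψ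
  | .wprev _ ψ => 1 + fsize ψ
  | .next _ ψ => 1 + fsize ψ
  | .wnext _ ψ => 1 + fsize ψ
  | .since _ ψ χ => 1 + fsize ψ + fsize χ
  | .trigger _ ψ χ => 1 + fsize ψ + fsize χ
  | .until_ _ ψ χ => 1 + fsize ψ + fsize χ
  | .release _ ψ χ => 1 + fsize ψ + fsize χ

/-- The finite bound `n` of an interval (`ω ↦ 0`). -/
def ivN (I : Ivl) : ℕ := I.2.toNat

/-- `n_φ`: the maximal `n` occurring in a binary metric operator of `φ`. -/
def maxN {A : Type} : MF A → ℕ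
  | .bot => 0
  | .atom _ => 0
  | .and ψ χ => max (maxN ψ) (maxN χ)
  | .or ψ χ => max (maxN ψ) (maxN χ)
  | .imp ψ χ => max (maxN ψ) (maxN χ)
  | .prev _ ψ => maxN ψ
  | .wprev _ ψ => maxN ψ
  | .next _ ψ => maxN ψ
  | .wnext _ ψ => maxN ψ
  | .since I ψ χ => max (ivN I) (max (maxN ψ) (maxN χ))
  | .trigger I ψ χ => max (ivN I) (max (maxN ψ) (maxN χ))
  | .until_ I ψ χ => max (ivN I) (max (maxN ψ) (maxN χ))
  | .release I ψ χ => max (ivN I) (max (maxN ψ) (maxN χ))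

/-- All binary temporal operators carry an interval of the form `[0,n]` with
`n < ω`. -/
def Restricted {A : Type} : MF A → Prop
  | .bot => True
  | .atom _ => True
  | .and ψ χ => Restricted ψ ∧ Restricted χ
  | .or ψ χ => Restricted ψ ∧ Restricted χ
  | .imp ψ χ => Restricted ψ ∧ Restricted χ
  | .prev _ ψ => Restricted ψ
  | .wprev _ ψ => Restricted ψ
  | .next _ ψ => Restricted ψ
  | .wnext _ ψ => Restricted ψ
  | .since I ψ χ => I.1 = 0 ∧ I.2 ≠ ⊤ ∧ Restricted ψ ∧ Restricted χ
  | .trigger I ψ χ => I.1 = 0 ∧ I.2 ≠ ⊤ ∧ Restricted ψ ∧ Restricted χ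
  | .until_ I ψ χ => I.1 = 0 ∧ I.2 ≠ ⊤ ∧ Restricted ψ ∧ Restricted χ
  | .release I ψ χ => I.1 = 0 ∧ I.2 ≠ ⊤ ∧ Restricted ψ ∧ Restricted χ

namespace MF
/-- Biconditional `φ ↔ ψ`. -/
def iff_ {A : Type} (φ ψ : MF A) : MF A := and (imp φ ψ) (imp ψ φ)
end MF

/-- The label `L_μ` of a formula `μ`: a fresh atom of the extended alphabet
(we take the extended alphabet to be `MF A` itself), with `L_μ = μ` for `⊥`
and atoms. -/
def Lab {A : Type} : MF A → MF (MF A)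
  | .bot => .bot
  | .atom a => .atom (.atom a)
  | μ => .atom μ

/-- Lift a formula over `A` to a formula over the extended alphabet `MF A`
(renaming each atom `a` to the extended atom `a`). -/
def liftF {A : Type} : MF A → MF (MF A)
  | .bot => .bot
  | .atom a => .atom (.atom a)
  | .and ψ χ => .and (liftF ψ) (liftF χ)
  | .or ψ χ => .or (liftF ψ) (liftF χ)
  | .imp ψ χ => .imp (liftF ψ) (liftF χ)
  | .prev I ψ => .prev I (liftF ψ)
  | .wprev I ψ => .wprev I (liftF ψ)
  | .next I ψ => .next I (liftF ψ)
  | .wnext I ψ => .wnext I (liftF ψ)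
  | .since I ψ χ => .since I (liftF ψ) (liftF χ)
  | .trigger I ψ χ => .trigger I (liftF ψ) (liftF χ)
  | .until_ I ψ χ => .until_ I (liftF ψ) (liftF χ)
  | .release I ψ χ => .release I (liftF ψ) (liftF χ)

/-- `◯̂ □ χ`: the dynamic-rule wrapper (non-metric weak next of always). -/
def dynR {A : Type} (χ : MF A) : MF A := MF.wnext (0, ⊤) (MF.always χ)

/-- Non-metric previous `● χ`. -/
def prevN {A : Type} (χ : MF A) : MF A := MF.prev (0, ⊤) χ

/-- Labels of the unfolding formulas `⊕_{[x,x]} (ψ ⊗_{[0,n−x]} χ)` for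
`x = 1, …, n`, where the unary operator and the binary operator are given by
`mk`. -/
def unfoldLabs {A : Type} (n : ℕ) (mk : Ivl → Ivl → MF A) : List (MF (MF A)) :=
  (List.range n).map (fun i =>
    Lab (mk (i + 1, ((i + 1 : ℕ) : ℕ∞)) (0, ((n - (i + 1) : ℕ) : ℕ∞))))

/-- The definition `η(μ)` of the label `L_μ` (Tables 1–3 plus the Boolean
cases), using biconditionals. -/
def eta {A : Type} : MF A → List (MF (MF A))
  | .bot => []
  | .atom _ => []
  | .and ψ χ =>
      [MF.always (MF.iff_ (Lab (.and ψ χ)) (.and (Lab ψ) (Lab χ)))]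
  | .or ψ χ =>
      [MF.always (MF.iff_ (Lab (.or ψ χ)) (.or (Lab ψ) (Lab χ)))]
  | .imp ψ χ =>
      [MF.always (MF.iff_ (Lab (.imp ψ χ)) (.imp (Lab ψ) (Lab χ)))]
  | .prev I ψ =>
      [dynR (MF.iff_ (Lab (.prev I ψ)) (.prev I (Lab ψ))),
       MF.neg (Lab (.prev I ψ))]
  | .wprev I ψ =>
      [dynR (MF.iff_ (Lab (.wprev I ψ)) (.wprev I (Lab ψ))),
       Lab (.wprev I ψ)]
  | .next I ψ =>
      [dynR (.imp (.prev I MF.top) (MF.iff_ (prevN (Lab (.next I ψ))) (Lab ψ))),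
       dynR (.imp (MF.neg (.prev I MF.top)) (MF.neg (prevN (Lab (.next I ψ))))),
       MF.always (.imp MF.final (MF.neg (Lab (.next I ψ))))]
  | .wnext I ψ =>
      [dynR (.imp (.prev I MF.top) (MF.iff_ (prevN (Lab (.wnext I ψ))) (Lab ψ))),
       dynR (.imp (MF.neg (.prev I MF.top)) (prevN (Lab (.wnext I ψ)))),
       MF.always (.imp MF.final (Lab (.wnext I ψ)))]
  | .since I ψ χ =>
      [MF.always (MF.iff_ (Lab (.since I ψ χ))
        (.or (Lab χ) (.and (Lab ψ)
          (bigOr (unfoldLabs (ivN I) (fun J K => .prev J (.since K ψ χ)))))))]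
  | .trigger I ψ χ =>
      [MF.always (MF.iff_ (Lab (.trigger I ψ χ))
        (.and (Lab χ) (.or (Lab ψ)
          (bigAnd (unfoldLabs (ivN I) (fun J K => .wprev J (.trigger K ψ χ)))))))]
  | .until_ I ψ χ =>
      [MF.always (MF.iff_ (Lab (.until_ I ψ χ))
        (.or (Lab χ) (.and (Lab ψ)
          (bigOr (unfoldLabs (ivN I) (fun J K => .next J (.until_ K ψ χ)))))))]
  | .release I ψ χ =>
      [MF.always (MF.iff_ (Lab (.release I ψ χ))
        (.and (Lab χ) (.or (Lab ψ)
          (bigAnd (unfoldLabs (ivN I) (fun J K => .wnext J (.release K ψ χ)))))))]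

/-- The logic-program version `η*(μ)` of the definition of `L_μ`
(Tables 1–3 plus Boolean cases, rules in initial and dynamic form). -/
def etaStar {A : Type} : MF A → List (MF (MF A))
  | .bot => []
  | .atom _ => []
  | .and ψ χ =>
      let Lμ := Lab (.and ψ χ)
      let r : List (MF (MF A)) :=
        [.imp Lμ (Lab ψ), .imp Lμ (Lab χ), .imp (.and (Lab ψ) (Lab χ)) Lμ]
      r ++ r.map dynR
  | .or ψ χ =>
      let Lμ := Lab (.or ψ χ)
      let r : List (MF (MF A)) :=
        [.imp (Lab ψ) Lμ, .imp (Lab χ) Lμ, .imp Lμ (.or (Lab ψ) (Lab χ))]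
      r ++ r.map dynR
  | .imp ψ χ =>
      let Lμ := Lab (.imp ψ χ)
      [dynR (.imp (.and Lμ (Lab ψ)) (Lab χ)),
       dynR (.imp (MF.neg (Lab ψ)) Lμ),
       dynR (.imp (Lab χ) Lμ),
       dynR (.imp MF.top (.or (Lab ψ) (.or (MF.neg (Lab χ)) Lμ))),
       .imp (.and Lμ (Lab ψ)) (Lab χ),
       .imp (MF.neg (Lab ψ)) Lμ,
       .imp (Lab χ) Lμ,
       .or (Lab ψ) (.or (MF.neg (Lab χ)) Lμ)]
  | .prev I ψ =>
      let Lμ := Lab (.prev I ψ)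
      [dynR (.imp Lμ (.prev I (Lab ψ))),
       dynR (.imp (.prev I (Lab ψ)) Lμ),
       MF.neg Lμ]
  | .wprev I ψ =>
      let Lμ := Lab (.wprev I ψ)
      [dynR (.imp (.and Lμ (.wprev I MF.top)) (prevN (Lab ψ))),
       dynR (.imp (.wprev I (Lab ψ)) Lμ),
       Lμ]
  | .next I ψ =>
      let Lμ := Lab (.next I ψ)
      [dynR (.imp (.prev I Lμ) (Lab ψ)),
       dynR (.imp (.and (.prev I MF.top) (Lab ψ)) (prevN Lμ)),
       dynR (.imp (MF.neg (.prev I MF.top)) (MF.neg (prevN Lμ))),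
       MF.always (.imp MF.final (MF.neg Lμ))]
  | .wnext I ψ =>
      let Lμ := Lab (.wnext I ψ)
      [dynR (.imp (.prev I Lμ) (Lab ψ)),
       dynR (.imp (.and (.prev I MF.top) (Lab ψ)) (prevN Lμ)),
       dynR (.imp (MF.neg (.prev I MF.top)) (prevN Lμ)),
       MF.always (.imp MF.final Lμ)]
  | .since I ψ χ =>
      let Lμ := Lab (.since I ψ χ)
      let Ds := unfoldLabs (ivN I) (fun J K => .prev J (.since K ψ χ))
      let r : List (MF (MF A)) :=
        [.imp Lμ (.or (Lab χ) (Lab ψ)),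
         .imp Lμ (.or (Lab χ) (bigOr Ds)),
         .imp (Lab χ) Lμ] ++
        Ds.map (fun D => .imp (.and (Lab ψ) D) Lμ)
      r ++ r.map dynR
  | .trigger I ψ χ =>
      let Lμ := Lab (.trigger I ψ χ)
      let Es := unfoldLabs (ivN I) (fun J K => .wprev J (.trigger K ψ χ))
      let r : List (MF (MF A)) :=
        [.imp Lμ (Lab χ)] ++
        Es.map (fun E => .imp Lμ (.or (Lab ψ) E)) ++
        [.imp (.and (Lab χ) (Lab ψ)) Lμ,
         .imp (.and (Lab χ) (bigAnd Es)) Lμ]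
      r ++ r.map dynR
  | .until_ I ψ χ =>
      let Lμ := Lab (.until_ I ψ χ)
      let Cs := unfoldLabs (ivN I) (fun J K => .next J (.until_ K ψ χ))
      let r : List (MF (MF A)) :=
        [.imp Lμ (.or (Lab χ) (Lab ψ)),
         .imp Lμ (.or (Lab χ) (bigOr Cs)),
         .imp (Lab χ) Lμ] ++
        Cs.map (fun C => .imp (.and (Lab ψ) C) Lμ)
      r ++ r.map dynR
  | .release I ψ χ =>
      let Lμ := Lab (.release I ψ χ)
      let Ws := unfoldLabs (ivN I) (fun J K => .wnext J (.release K ψ χ))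
      let r : List (MF (MF A)) :=
        [.imp Lμ (Lab χ)] ++
        Ws.map (fun W => .imp Lμ (.or (Lab ψ) W)) ++
        [.imp (.and (Lab χ) (Lab ψ)) Lμ,
         .imp (.and (Lab χ) (bigAnd Ws)) Lμ]
      r ++ r.map dynR

/-- `η*(φ) = ⋃ { η*(μ) : μ ∈ cl(φ) }`. -/
def etaStarCl {A : Type} (φ : MF A) : Set (MF (MF A)) :=
  {r | ∃ μ : MF A, Cl φ μ ∧ r ∈ etaStar μ}

/-- `η(φ) = ⋃ { η(μ) : μ ∈ cl(φ) }`. -/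
def etaCl {A : Type} (φ : MF A) : Set (MF (MF A)) :=
  {r | ∃ μ : MF A, Cl φ μ ∧ r ∈ eta μ}

/-- Projection of a trace over the extended alphabet back to `A`. -/
def projTrace {A : Type} (M : TimedTrace (MF A)) : TimedTrace A where
  lam := M.lam
  H := fun i => {a | MF.atom a ∈ M.H i}
  T := fun i => {a | MF.atom a ∈ M.T i}
  tau := M.tau
  sub := fun i h _a ha => M.sub i h ha
  mono := M.mono
  zero := M.zero
section Helpers
open Set

lemma sSup_eq_two_iff {S : Set ℕ} (hb : ∀ v ∈ S, v ≤ 2) : sSup S = 2 ↔ 2 ∈ S := by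
  constructor
  · intro h
    rcases S.eq_empty_or_nonempty with rfl | hne
    · simp [csSup_empty] at h
    · have := Nat.sSup_mem hne ⟨2, fun v hv => hb v hv⟩
      rwa [h] at this
  · intro h
    have h1 : 2 ≤ sSup S := le_csSup ⟨2, fun v hv => hb v hv⟩ h
    have h2 : sSup S ≤ 2 := csSup_le' (fun v hv => hb v hv)
    omega

lemma one_le_sSup_iff {S : Set ℕ} (hb : ∀ v ∈ S, v ≤ 2) : 1 ≤ sSup S ↔ ∃ v ∈ S, 1 ≤ v := by
  constructor
  · intro h
    rcases S.eq_empty_or_nonempty with rfl | hne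
    · simp [csSup_empty] at h
    · exact ⟨sSup S, Nat.sSup_mem hne ⟨2, fun v hv => hb v hv⟩, h⟩
  · rintro ⟨v, hv, h1⟩
    exact le_trans h1 (le_csSup ⟨2, fun w hw => hb w hw⟩ hv)

lemma sInf_insert_two_eq {S : Set ℕ} (hb : ∀ v ∈ S, v ≤ 2) :
    sInf (insert 2 S) = 2 ↔ ∀ v ∈ S, v = 2 := by
  constructor
  · intro h v hv
    have h1 : sInf (insert 2 S) ≤ v := Nat.sInf_le (Set.mem_insert_of_mem _ hv)
    have := hb v hv
    omega
  · intro h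
    have h1 : 2 ≤ sInf (insert 2 S) := by
      apply le_csInf ⟨2, Set.mem_insert _ _⟩
      rintro b (rfl | hb')
      · exact le_refl 2
      · exact le_of_eq (h b hb').symm
    have h2 : sInf (insert 2 S) ≤ 2 := Nat.sInf_le (Set.mem_insert _ _)
    omega

lemma one_le_sInf_insert_two {S : Set ℕ} :
    1 ≤ sInf (insert 2 S) ↔ ∀ v ∈ S, 1 ≤ v := by
  constructor
  · intro h v hv
    exact le_trans h (Nat.sInf_le (Set.mem_insert_of_mem _ hv))
  · intro h
    apply le_csInf ⟨2, Set.mem_insert _ _⟩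
    rintro b (rfl | hb')
    · omega
    · exact h b hb'

end Helpers
section Tot

variable {A : Type}

lemma tot_tot (M : TimedTrace A) : M.tot.tot = M.tot := rfl

@[simp] lemma tot_lam (M : TimedTrace A) : M.tot.lam = M.lam := rfl
@[simp] lemma tot_tau (M : TimedTrace A) : M.tot.tau = M.tau := rfl
@[simp] lemma tot_H (M : TimedTrace A) : M.tot.H = M.T := rfl
@[simp] lemma tot_T (M : TimedTrace A) : M.tot.T = M.T := rfl

lemma tot_strict {M : TimedTrace A} (h : M.strict) : M.tot.strict := h

lemma mval_le_two (M : TimedTrace A) (φ : MF A) : ∀ k, mval M φ k ≤ 2 := by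
  induction φ with
  | bot => intro k; simp [mval]
  | atom a => intro k; simp only [mval]; split <;> [skip; split] <;> omega
  | and φ ψ ih1 ih2 => intro k; simp only [mval]; exact le_trans (min_le_left _ _) (ih1 k)
  | or φ ψ ih1 ih2 => intro k; simp only [mval]; exact max_le (ih1 k) (ih2 k)
  | imp φ ψ ih1 ih2 => intro k; simp only [mval]; split <;> [omega; exact ih2 k]
  | prev I φ ih => intro k; simp only [mval]; split <;> [exact ih _; omega]
  | wprev I φ ih => intro k; simp only [mval]; split <;> [omega; exact ih _]
  | next I φ ih => intro k; simp only [mval]; split <;> [exact ih _; omega]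
  | wnext I φ ih => intro k; simp only [mval]; split <;> [omega; exact ih _]
  | since I φ ψ ih1 ih2 =>
      intro k; simp only [mval]
      apply csSup_le'
      rintro v ⟨j, _, _, rfl⟩
      exact le_trans (min_le_left _ _) (ih2 j)
  | trigger I φ ψ ih1 ih2 =>
      intro k; simp only [mval]
      exact le_trans (Nat.sInf_le (Set.mem_insert _ _)) le_rfl
  | until_ I φ ψ ih1 ih2 =>
      intro k; simp only [mval]
      apply csSup_le'
      rintro v ⟨j, _, _, _, rfl⟩
      exact le_trans (min_le_left _ _) (ih2 j)
  | release I φ ψ ih1 ih2 =>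
      intro k; simp only [mval]
      exact le_trans (Nat.sInf_le (Set.mem_insert _ _)) le_rfl

end Tot
section SatMval

variable {A : Type}

lemma sat_mval (M : TimedTrace A) (φ : MF A) : ∀ k : ℕ, (k : ℕ∞) < M.lam →
    ((sat M k φ ↔ mval M φ k = 2) ∧ (sat M.tot k φ ↔ 1 ≤ mval M φ k)) := by
  induction φ with
  | bot => intro k hk; simp [sat, mval]
  | atom a =>
      intro k hk
      have hsub := M.sub k hk
      by_cases hH : a ∈ M.H k
      · have hT : a ∈ M.T k := hsub hH
        simp [sat, mval, hH, hT]
      · by_cases hT : a ∈ M.T k <;> simp [sat, mval, hH, hT]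
  | and φ ψ ih1 ih2 =>
      intro k hk
      have ha := mval_le_two M φ k; have hb := mval_le_two M ψ k
      simp only [sat, mval, (ih1 k hk).1, (ih1 k hk).2, (ih2 k hk).1, (ih2 k hk).2]
      omega
  | or φ ψ ih1 ih2 =>
      intro k hk
      have ha := mval_le_two M φ k; have hb := mval_le_two M ψ k
      simp only [sat, mval, (ih1 k hk).1, (ih1 k hk).2, (ih2 k hk).1, (ih2 k hk).2]
      omega
  | imp φ ψ ih1 ih2 =>
      intro k hk
      have ha := mval_le_two M φ k; have hb := mval_le_two M ψ k
      simp only [sat, mval, tot_tot, (ih1 k hk).1, (ih1 k hk).2, (ih2 k hk).1, (ih2 k hk).2]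
      constructor
      · constructor
        · rintro ⟨h1, h2⟩
          split <;> omega
        · intro h; split at h <;> omega
      · constructor
        · intro h1; split <;> omega
        · intro h; split at h <;> omega
  | prev I φ ih =>
      intro k hk
      have hk' : ((k - 1 : ℕ) : ℕ∞) < M.lam :=
        lt_of_le_of_lt (by exact_mod_cast Nat.sub_le k 1) hk
      by_cases hc : 0 < k ∧ memI I (M.tau k - M.tau (k - 1))
      · simp [sat, mval, hc, hc.1, hc.2, (ih (k-1) hk').1, (ih (k-1) hk').2]
      · have e : mval M (.prev I φ) k = 0 := by simp only [mval, if_neg hc]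
        rw [e]
        constructor
        · exact iff_of_false (fun h => hc ⟨h.1, h.2.2⟩) (by omega)
        · exact iff_of_false (fun h => hc ⟨h.1, h.2.2⟩) (by omega)
  | wprev I φ ih =>
      intro k hk
      have hk' : ((k - 1 : ℕ) : ℕ∞) < M.lam :=
        lt_of_le_of_lt (by exact_mod_cast Nat.sub_le k 1) hk
      by_cases hc : k = 0 ∨ ¬ memI I (M.tau k - M.tau (k - 1))
      · have e : mval M (.wprev I φ) k = 2 := by simp only [mval, if_pos hc]
        rw [e]
        have hs : sat M k (MF.wprev I φ) := by
          rcases hc with h | h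
          · exact Or.inl h
          · exact Or.inr (Or.inr h)
        have hs' : sat M.tot k (MF.wprev I φ) := by
          rcases hc with h | h
          · exact Or.inl h
          · exact Or.inr (Or.inr h)
        exact ⟨iff_of_true hs (by omega), iff_of_true hs' (by omega)⟩
      · push_neg at hc
        simp [sat, mval, hc.1, hc.2, (ih (k-1) hk').1, (ih (k-1) hk').2]
  | next I φ ih =>
      intro k hk
      by_cases hc : ((k + 1 : ℕ) : ℕ∞) < M.lam ∧ memI I (M.tau (k + 1) - M.tau k)
      · have hc1 : (k : ℕ∞) + 1 < M.lam := by exact_mod_cast hc.1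
        simp [sat, mval, hc1, hc.2, (ih (k+1) hc.1).1, (ih (k+1) hc.1).2]
      · have e : mval M (.next I φ) k = 0 := by simp only [mval, if_neg hc]
        rw [e]
        constructor
        · exact iff_of_false (fun h => hc ⟨h.1, h.2.2⟩) (by omega)
        · exact iff_of_false (fun h => hc ⟨h.1, h.2.2⟩) (by omega)
  | wnext I φ ih =>
      intro k hk
      by_cases hc : ((k + 1 : ℕ) : ℕ∞) = M.lam ∨ ¬ memI I (M.tau (k + 1) - M.tau k)
      · have e : mval M (.wnext I φ) k = 2 := by simp only [mval, if_pos hc]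
        rw [e]
        have hs : sat M k (MF.wnext I φ) := by
          rcases hc with h | h
          · exact Or.inl h
          · exact Or.inr (Or.inr h)
        have hs' : sat M.tot k (MF.wnext I φ) := by
          rcases hc with h | h
          · exact Or.inl h
          · exact Or.inr (Or.inr h)
        exact ⟨iff_of_true hs (by omega), iff_of_true hs' (by omega)⟩
      · push_neg at hc
        have hk1 : ((k + 1 : ℕ) : ℕ∞) < M.lam := by
          refine lt_of_le_of_ne ?_ hc.1
          have : (k : ℕ∞) + 1 ≤ M.lam := Order.add_one_le_of_lt hk
          exact_mod_cast this
        have hc1 : ¬ ((k : ℕ∞) + 1 = M.lam) := by exact_mod_cast hc.1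
        simp [sat, mval, hc1, hc.2, (ih (k+1) hk1).1, (ih (k+1) hk1).2]
  | since I φ ψ ih1 ih2 =>
      intro k hk
      have hpos : ∀ j : ℕ, j ≤ k → ((j : ℕ) : ℕ∞) < M.lam := fun j hj =>
        lt_of_le_of_lt (by exact_mod_cast hj) hk
      constructor
      · simp only [sat, mval]
        rw [sSup_eq_two_iff (by rintro v ⟨j, _, _, rfl⟩; exact le_trans (min_le_left _ _) (mval_le_two M ψ j))]
        simp only [Set.mem_setOf_eq]
        constructor
        · rintro ⟨j, hkj, hm, hψ, hφ⟩
          refine ⟨j, hkj, hm, ?_⟩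
          have h2 : mval M ψ j = 2 := (ih2 j (hpos j hkj)).1.mp hψ
          have h3 : sInf (insert 2 {w | ∃ i, j < i ∧ i ≤ k ∧ w = mval M φ i}) = 2 := by
            rw [sInf_insert_two_eq (by rintro w ⟨i, _, _, rfl⟩; exact mval_le_two M φ i)]
            rintro w ⟨i, hki, hij, rfl⟩
            exact (ih1 i (hpos i hij)).1.mp (hφ i hki hij)
          rw [h2, h3]
          omega
        · rintro ⟨j, hkj, hm, heq⟩
          have hψ2 : 2 ≤ mval M ψ j := le_trans (le_of_eq heq) (min_le_left _ _)
          have hI2 : 2 ≤ sInf (insert 2 {w | ∃ i, j < i ∧ i ≤ k ∧ w = mval M φ i}) :=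
            le_trans (le_of_eq heq) (min_le_right _ _)
          refine ⟨j, hkj, hm,
            (ih2 j (hpos j hkj)).1.mpr (by have := mval_le_two M ψ j; omega), ?_⟩
          intro i hki hij
          have hle : sInf (insert 2 {w | ∃ i, j < i ∧ i ≤ k ∧ w = mval M φ i}) ≤ mval M φ i :=
            Nat.sInf_le (Set.mem_insert_of_mem _ ⟨i, hki, hij, rfl⟩)
          exact (ih1 i (hpos i hij)).1.mpr (by have := mval_le_two M φ i; omega)
      · simp only [sat, mval, tot_lam, tot_tau]
        rw [one_le_sSup_iff (by rintro v ⟨j, _, _, rfl⟩; exact le_trans (min_le_left _ _) (mval_le_two M ψ j))]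
        simp only [Set.mem_setOf_eq]
        constructor
        · rintro ⟨j, hkj, hm, hψ, hφ⟩
          refine ⟨_, ⟨j, hkj, hm, rfl⟩, ?_⟩
          refine le_min ((ih2 j (hpos j hkj)).2.mp hψ) ?_
          rw [one_le_sInf_insert_two]
          rintro w ⟨i, hki, hij, rfl⟩
          exact (ih1 i (hpos i hij)).2.mp (hφ i hki hij)
        · rintro ⟨v, ⟨j, hkj, hm, rfl⟩, hv⟩
          refine ⟨j, hkj, hm,
            (ih2 j (hpos j hkj)).2.mpr (le_trans hv (min_le_left _ _)), ?_⟩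
          intro i hki hij
          have h2 : 1 ≤ sInf (insert 2 {w | ∃ i, j < i ∧ i ≤ k ∧ w = mval M φ i}) :=
            le_trans hv (min_le_right _ _)
          rw [one_le_sInf_insert_two] at h2
          exact (ih1 i (hpos i hij)).2.mpr (h2 _ ⟨i, hki, hij, rfl⟩)
  | trigger I φ ψ ih1 ih2 =>
      intro k hk
      have hpos : ∀ j : ℕ, j ≤ k → ((j : ℕ) : ℕ∞) < M.lam := fun j hj =>
        lt_of_le_of_lt (by exact_mod_cast hj) hk
      have hbW : ∀ (j : ℕ), ∀ w ∈ {w : ℕ | ∃ i, j < i ∧ i ≤ k ∧ w = mval M φ i}, w ≤ 2 := by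
        rintro j w ⟨i, _, _, rfl⟩; exact mval_le_two M φ i
      constructor
      · simp only [sat, mval]
        rw [sInf_insert_two_eq (by rintro v ⟨j, _, _, rfl⟩; exact max_le (mval_le_two M ψ j) (csSup_le' (hbW j)))]
        simp only [Set.mem_setOf_eq]
        constructor
        · intro h
          rintro v ⟨j, hkj, hm, rfl⟩
          have hW2 : sSup {w : ℕ | ∃ i, j < i ∧ i ≤ k ∧ w = mval M φ i} ≤ 2 := csSup_le' (hbW j)
          rcases h j hkj hm with hψ | ⟨i, hki, hij, hφ⟩
          · have := (ih2 j (hpos j hkj)).1.mp hψ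
            omega
          · have h2 : mval M φ i = 2 := (ih1 i (hpos i hij)).1.mp hφ
            have hle : mval M φ i ≤ sSup {w : ℕ | ∃ i, j < i ∧ i ≤ k ∧ w = mval M φ i} :=
              le_csSup ⟨2, hbW j⟩ ⟨i, hki, hij, rfl⟩
            have := mval_le_two M ψ j
            omega
        · intro h j hkj hm
          have hv := h _ ⟨j, hkj, hm, rfl⟩
          have hψ2 := mval_le_two M ψ j
          have hW2 : sSup {w : ℕ | ∃ i, j < i ∧ i ≤ k ∧ w = mval M φ i} ≤ 2 := csSup_le' (hbW j)
          have : mval M ψ j = 2 ∨ sSup {w : ℕ | ∃ i, j < i ∧ i ≤ k ∧ w = mval M φ i} = 2 := by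
            omega
          rcases this with h2 | h2
          · exact Or.inl ((ih2 j (hpos j hkj)).1.mpr h2)
          · rw [sSup_eq_two_iff (hbW j)] at h2
            obtain ⟨i, hki, hij, heq⟩ := h2
            exact Or.inr ⟨i, hki, hij, (ih1 i (hpos i hij)).1.mpr heq.symm⟩
      · simp only [sat, mval, tot_lam, tot_tau]
        rw [one_le_sInf_insert_two]
        simp only [Set.mem_setOf_eq]
        constructor
        · intro h
          rintro v ⟨j, hkj, hm, rfl⟩
          rcases h j hkj hm with hψ | ⟨i, hki, hij, hφ⟩
          · exact le_trans ((ih2 j (hpos j hkj)).2.mp hψ) (le_max_left _ _)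
          · have h1 : 1 ≤ mval M φ i := (ih1 i (hpos i hij)).2.mp hφ
            have hle : mval M φ i ≤ sSup {w : ℕ | ∃ i, j < i ∧ i ≤ k ∧ w = mval M φ i} :=
              le_csSup ⟨2, hbW j⟩ ⟨i, hki, hij, rfl⟩
            exact le_trans (le_trans h1 hle) (le_max_right _ _)
        · intro h j hkj hm
          have hv := h _ ⟨j, hkj, hm, rfl⟩
          have : 1 ≤ mval M ψ j ∨ 1 ≤ sSup {w : ℕ | ∃ i, j < i ∧ i ≤ k ∧ w = mval M φ i} := by
            omega
          rcases this with h1 | h1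
          · exact Or.inl ((ih2 j (hpos j hkj)).2.mpr h1)
          · rw [one_le_sSup_iff (hbW j)] at h1
            obtain ⟨w, ⟨i, hki, hij, rfl⟩, hw⟩ := h1
            exact Or.inr ⟨i, hki, hij, (ih1 i (hpos i hij)).2.mpr hw⟩
  | until_ I φ ψ ih1 ih2 =>
      intro k hk
      constructor
      · simp only [sat, mval]
        rw [sSup_eq_two_iff (by rintro v ⟨j, _, _, _, rfl⟩; exact le_trans (min_le_left _ _) (mval_le_two M ψ j))]
        simp only [Set.mem_setOf_eq]
        constructor
        · rintro ⟨j, hkj, hjl, hm, hψ, hφ⟩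
          refine ⟨j, hkj, hjl, hm, ?_⟩
          have h2 : mval M ψ j = 2 := (ih2 j hjl).1.mp hψ
          have h3 : sInf (insert 2 {w | ∃ i, k ≤ i ∧ i < j ∧ w = mval M φ i}) = 2 := by
            rw [sInf_insert_two_eq (by rintro w ⟨i, _, _, rfl⟩; exact mval_le_two M φ i)]
            rintro w ⟨i, hki, hij, rfl⟩
            exact (ih1 i (lt_trans (by exact_mod_cast hij) hjl)).1.mp (hφ i hki hij)
          rw [h2, h3]
          omega
        · rintro ⟨j, hkj, hjl, hm, heq⟩
          have hψ2 : 2 ≤ mval M ψ j := le_trans (le_of_eq heq) (min_le_left _ _)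
          have hI2 : 2 ≤ sInf (insert 2 {w | ∃ i, k ≤ i ∧ i < j ∧ w = mval M φ i}) :=
            le_trans (le_of_eq heq) (min_le_right _ _)
          refine ⟨j, hkj, hjl, hm,
            (ih2 j hjl).1.mpr (by have := mval_le_two M ψ j; omega), ?_⟩
          intro i hki hij
          have hle : sInf (insert 2 {w | ∃ i, k ≤ i ∧ i < j ∧ w = mval M φ i}) ≤ mval M φ i :=
            Nat.sInf_le (Set.mem_insert_of_mem _ ⟨i, hki, hij, rfl⟩)
          exact (ih1 i (lt_trans (by exact_mod_cast hij) hjl)).1.mpr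
            (by have := mval_le_two M φ i; omega)
      · simp only [sat, mval, tot_lam, tot_tau]
        rw [one_le_sSup_iff (by rintro v ⟨j, _, _, _, rfl⟩; exact le_trans (min_le_left _ _) (mval_le_two M ψ j))]
        simp only [Set.mem_setOf_eq]
        constructor
        · rintro ⟨j, hkj, hjl, hm, hψ, hφ⟩
          refine ⟨_, ⟨j, hkj, hjl, hm, rfl⟩, ?_⟩
          refine le_min ((ih2 j hjl).2.mp hψ) ?_
          rw [one_le_sInf_insert_two]
          rintro w ⟨i, hki, hij, rfl⟩
          exact (ih1 i (lt_trans (by exact_mod_cast hij) hjl)).2.mp (hφ i hki hij)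
        · rintro ⟨v, ⟨j, hkj, hjl, hm, rfl⟩, hv⟩
          refine ⟨j, hkj, hjl, hm,
            (ih2 j hjl).2.mpr (le_trans hv (min_le_left _ _)), ?_⟩
          intro i hki hij
          have h2 : 1 ≤ sInf (insert 2 {w | ∃ i, k ≤ i ∧ i < j ∧ w = mval M φ i}) :=
            le_trans hv (min_le_right _ _)
          rw [one_le_sInf_insert_two] at h2
          exact (ih1 i (lt_trans (by exact_mod_cast hij) hjl)).2.mpr (h2 _ ⟨i, hki, hij, rfl⟩)
  | release I φ ψ ih1 ih2 =>
      intro k hk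
      have hbW : ∀ (j : ℕ), ∀ w ∈ {w : ℕ | ∃ i, k ≤ i ∧ i < j ∧ w = mval M φ i}, w ≤ 2 := by
        rintro j w ⟨i, _, _, rfl⟩; exact mval_le_two M φ i
      constructor
      · simp only [sat, mval]
        rw [sInf_insert_two_eq (by rintro v ⟨j, _, _, _, rfl⟩; exact max_le (mval_le_two M ψ j) (csSup_le' (hbW j)))]
        simp only [Set.mem_setOf_eq]
        constructor
        · intro h
          rintro v ⟨j, hkj, hjl, hm, rfl⟩
          have hW2 : sSup {w : ℕ | ∃ i, k ≤ i ∧ i < j ∧ w = mval M φ i} ≤ 2 := csSup_le' (hbW j)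
          rcases h j hkj hjl hm with hψ | ⟨i, hki, hij, hφ⟩
          · have := (ih2 j hjl).1.mp hψ
            omega
          · have h2 : mval M φ i = 2 := (ih1 i (lt_trans (by exact_mod_cast hij) hjl)).1.mp hφ
            have hle : mval M φ i ≤ sSup {w : ℕ | ∃ i, k ≤ i ∧ i < j ∧ w = mval M φ i} :=
              le_csSup ⟨2, hbW j⟩ ⟨i, hki, hij, rfl⟩
            have := mval_le_two M ψ j
            omega
        · intro h j hkj hjl hm
          have hv := h _ ⟨j, hkj, hjl, hm, rfl⟩
          have hψ2 := mval_le_two M ψ j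
          have hW2 : sSup {w : ℕ | ∃ i, k ≤ i ∧ i < j ∧ w = mval M φ i} ≤ 2 := csSup_le' (hbW j)
          have : mval M ψ j = 2 ∨ sSup {w : ℕ | ∃ i, k ≤ i ∧ i < j ∧ w = mval M φ i} = 2 := by
            omega
          rcases this with h2 | h2
          · exact Or.inl ((ih2 j hjl).1.mpr h2)
          · rw [sSup_eq_two_iff (hbW j)] at h2
            obtain ⟨i, hki, hij, heq⟩ := h2
            exact Or.inr ⟨i, hki, hij,
              (ih1 i (lt_trans (by exact_mod_cast hij) hjl)).1.mpr heq.symm⟩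
      · simp only [sat, mval, tot_lam, tot_tau]
        rw [one_le_sInf_insert_two]
        simp only [Set.mem_setOf_eq]
        constructor
        · intro h
          rintro v ⟨j, hkj, hjl, hm, rfl⟩
          rcases h j hkj hjl hm with hψ | ⟨i, hki, hij, hφ⟩
          · exact le_trans ((ih2 j hjl).2.mp hψ) (le_max_left _ _)
          · have h1 : 1 ≤ mval M φ i := (ih1 i (lt_trans (by exact_mod_cast hij) hjl)).2.mp hφ
            have hle : mval M φ i ≤ sSup {w : ℕ | ∃ i, k ≤ i ∧ i < j ∧ w = mval M φ i} :=
              le_csSup ⟨2, hbW j⟩ ⟨i, hki, hij, rfl⟩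
            exact le_trans (le_trans h1 hle) (le_max_right _ _)
        · intro h j hkj hjl hm
          have hv := h _ ⟨j, hkj, hjl, hm, rfl⟩
          have : 1 ≤ mval M ψ j ∨ 1 ≤ sSup {w : ℕ | ∃ i, k ≤ i ∧ i < j ∧ w = mval M φ i} := by
            omega
          rcases this with h1 | h1
          · exact Or.inl ((ih2 j hjl).2.mpr h1)
          · rw [one_le_sSup_iff (hbW j)] at h1
            obtain ⟨w, ⟨i, hki, hij, rfl⟩, hw⟩ := h1
            exact Or.inr ⟨i, hki, hij,
              (ih1 i (lt_trans (by exact_mod_cast hij) hjl)).2.mpr hw⟩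

end SatMval
section Infra

variable {A : Type}

lemma mval_eq_of_sat_iffs {M : TimedTrace A} {k : ℕ} (hk : (k : ℕ∞) < M.lam)
    {φ ψ : MF A} (h1 : sat M k φ ↔ sat M k ψ) (h2 : sat M.tot k φ ↔ sat M.tot k ψ) :
    mval M φ k = mval M ψ k := by
  have a1 := (sat_mval M φ k hk).1
  have a2 := (sat_mval M φ k hk).2
  have b1 := (sat_mval M ψ k hk).1
  have b2 := (sat_mval M ψ k hk).2
  have c1 : mval M φ k = 2 ↔ mval M ψ k = 2 := by rw [← a1, ← b1]; exact h1
  have c2 : 1 ≤ mval M φ k ↔ 1 ≤ mval M ψ k := by rw [← a2, ← b2]; exact h2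
  have := mval_le_two M φ k
  have := mval_le_two M ψ k
  omega

lemma tau_mono (M : TimedTrace A) : ∀ i j : ℕ, i ≤ j → (j : ℕ∞) < M.lam →
    M.tau i ≤ M.tau j := by
  intro i j
  induction j with
  | zero => intro h _; have h0 : i = 0 := Nat.le_zero.mp h; rw [h0]
  | succ j ih =>
      intro hij hj
      rcases Nat.lt_or_ge i (j+1) with h | h
      · have hj' : (j : ℕ∞) < M.lam := lt_trans (by exact_mod_cast Nat.lt_succ_self j) hj
        exact le_trans (ih (by omega) hj') (M.mono j hj)
      · have : i = j + 1 := by omega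
        subst this; exact le_refl _

lemma tau_strict_mono {M : TimedTrace A} (hs : M.strict) : ∀ i j : ℕ, i < j →
    (j : ℕ∞) < M.lam → M.tau i < M.tau j := by
  intro i j
  induction j with
  | zero => intro h _; omega
  | succ j ih =>
      intro hij hj
      have hstep : M.tau j < M.tau (j+1) := hs j hj
      rcases Nat.lt_or_ge i j with h | h
      · have hj' : (j : ℕ∞) < M.lam := lt_trans (by exact_mod_cast Nat.lt_succ_self j) hj
        exact lt_trans (ih h hj') hstep
      · have : i = j := by omega
        subst this; exact hstep

lemma sat_always_elim {M : TimedTrace A} {χ : MF A} (h : sat M 0 (MF.always χ)) :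
    ∀ j : ℕ, (j : ℕ∞) < M.lam → sat M j χ := by
  intro j hj
  rcases h j (Nat.zero_le j) hj ⟨Nat.zero_le _, le_top⟩ with h' | ⟨i, _, _, hfalse⟩
  · exact h'
  · exact absurd hfalse (by simp [sat])

lemma sat_dynR_elim {M : TimedTrace A} {χ : MF A} (h : sat M 0 (dynR χ)) :
    ∀ j : ℕ, 1 ≤ j → (j : ℕ∞) < M.lam → sat M j χ := by
  intro j h1 hj
  rcases h with h' | h' | h'
  · exfalso
    have : (j : ℕ∞) < ((0 + 1 : ℕ) : ℕ∞) := h' ▸ hj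
    have : j < 0 + 1 := by exact_mod_cast this
    omega
  · rcases h' j h1 hj ⟨Nat.zero_le _, le_top⟩ with h'' | ⟨i, _, _, hfalse⟩
    · exact h''
    · exact absurd hfalse (by simp [sat])
  · exact absurd ⟨Nat.zero_le _, le_top⟩ h'

lemma sat_iff_elim {M : TimedTrace A} {k : ℕ} {φ ψ : MF A}
    (h : sat M k (MF.iff_ φ ψ)) :
    (sat M k φ ↔ sat M k ψ) ∧ (sat M.tot k φ ↔ sat M.tot k ψ) := by
  obtain ⟨⟨h1, h2⟩, ⟨h3, h4⟩⟩ := h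
  exact ⟨⟨h1, h3⟩, ⟨h2, h4⟩⟩

lemma sat_top (M : TimedTrace A) (k : ℕ) : sat M k (MF.top : MF A) :=
  ⟨fun h => h, fun h => h⟩

lemma sat_bigOr {M : TimedTrace A} {k : ℕ} : ∀ (l : List (MF A)),
    sat M k (bigOr l) ↔ ∃ r ∈ l, sat M k r := by
  intro l
  induction l with
  | nil => simp [bigOr, sat]
  | cons a l ih =>
      simp only [bigOr, sat, ih, List.mem_cons]
      constructor
      · rintro (h | ⟨r, hr, h⟩)
        · exact ⟨a, Or.inl rfl, h⟩
        · exact ⟨r, Or.inr hr, h⟩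
      · rintro ⟨r, (rfl | hr), h⟩
        · exact Or.inl h
        · exact Or.inr ⟨r, hr, h⟩

lemma sat_bigAnd {M : TimedTrace A} {k : ℕ} : ∀ (l : List (MF A)),
    sat M k (bigAnd l) ↔ ∀ r ∈ l, sat M k r := by
  intro l
  induction l with
  | nil => simp [bigAnd, sat_top]
  | cons a l ih =>
      simp only [bigAnd, sat, ih, List.mem_cons]
      constructor
      · rintro ⟨h1, h2⟩ r (rfl | hr)
        · exact h1
        · exact h2 r hr
      · intro h
        exact ⟨h a (Or.inl rfl), fun r hr => h r (Or.inr hr)⟩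

lemma mem_unfoldLabs {n : ℕ} {mk : Ivl → Ivl → MF A} {r : MF (MF A)} :
    r ∈ unfoldLabs n mk ↔
      ∃ x, 1 ≤ x ∧ x ≤ n ∧ r = Lab (mk (x, (x : ℕ∞)) (0, ((n - x : ℕ) : ℕ∞))) := by
  simp only [unfoldLabs, List.mem_map, List.mem_range]
  constructor
  · rintro ⟨i, hi, rfl⟩
    exact ⟨i + 1, by omega, by omega, rfl⟩
  · rintro ⟨x, h1, h2, rfl⟩
    have hx : x - 1 + 1 = x := by omega
    exact ⟨x - 1, by omega, by rw [hx]⟩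

lemma Cl_restricted {φ : MF A} (hres : Restricted φ) :
    ∀ μ, Cl φ μ → Restricted μ := by
  intro μ h
  induction h with
  | self => exact hres
  | and₁ _ ih => exact ih.1
  | and₂ _ ih => exact ih.2
  | or₁ _ ih => exact ih.1
  | or₂ _ ih => exact ih.2
  | imp₁ _ ih => exact ih.1
  | imp₂ _ ih => exact ih.2
  | prev _ ih => exact ih
  | wprev _ ih => exact ih
  | next _ ih => exact ih
  | wnext _ ih => exact ih
  | since₁ _ ih => exact ih.2.2.1
  | since₂ _ ih => exact ih.2.2.2
  | trigger₁ _ ih => exact ih.2.2.1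
  | trigger₂ _ ih => exact ih.2.2.2
  | until₁ _ ih => exact ih.2.2.1
  | until₂ _ ih => exact ih.2.2.2
  | release₁ _ ih => exact ih.2.2.1
  | release₂ _ ih => exact ih.2.2.2
  | until_unfold _ _ _ ih =>
      exact ⟨rfl, by exact (ENat.coe_ne_top _), ih.2.2⟩
  | release_unfold _ _ _ ih =>
      exact ⟨rfl, by exact (ENat.coe_ne_top _), ih.2.2⟩
  | since_unfold _ _ _ ih =>
      exact ⟨rfl, by exact (ENat.coe_ne_top _), ih.2.2⟩
  | trigger_unfold _ _ _ ih =>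
      exact ⟨rfl, by exact (ENat.coe_ne_top _), ih.2.2⟩

/-- Rank used for the well-founded induction. -/
def rank : MF A → ℕ
  | .bot => 1
  | .atom _ => 1
  | .and ψ χ => rank ψ + rank χ + 1
  | .or ψ χ => rank ψ + rank χ + 1
  | .imp ψ χ => rank ψ + rank χ + 1
  | .prev _ ψ => rank ψ + 1
  | .wprev _ ψ => rank ψ + 1
  | .next _ ψ => rank ψ + 1
  | .wnext _ ψ => rank ψ + 1
  | .since I ψ χ => rank ψ + rank χ + 2 * ivN I + 2
  | .trigger I ψ χ => rank ψ + rank χ + 2 * ivN I + 2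
  | .until_ I ψ χ => rank ψ + rank χ + 2 * ivN I + 2
  | .release I ψ χ => rank ψ + rank χ + 2 * ivN I + 2

lemma one_le_rank : ∀ μ : MF A, 1 ≤ rank μ := by
  intro μ; cases μ <;> simp [rank]

end Infra

@[simp] lemma rank_prev {A : Type} (I : Ivl) (ψ : MF A) : rank (MF.prev I ψ) = rank ψ + 1 := rfl
@[simp] lemma rank_wprev {A : Type} (I : Ivl) (ψ : MF A) : rank (MF.wprev I ψ) = rank ψ + 1 := rfl
@[simp] lemma rank_next {A : Type} (I : Ivl) (ψ : MF A) : rank (MF.next I ψ) = rank ψ + 1 := rfl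
@[simp] lemma rank_wnext {A : Type} (I : Ivl) (ψ : MF A) : rank (MF.wnext I ψ) = rank ψ + 1 := rfl
@[simp] lemma rank_since {A : Type} (I : Ivl) (ψ χ : MF A) :
    rank (MF.since I ψ χ) = rank ψ + rank χ + 2 * ivN I + 2 := rfl
@[simp] lemma rank_trigger {A : Type} (I : Ivl) (ψ χ : MF A) :
    rank (MF.trigger I ψ χ) = rank ψ + rank χ + 2 * ivN I + 2 := rfl
@[simp] lemma rank_until {A : Type} (I : Ivl) (ψ χ : MF A) :
    rank (MF.until_ I ψ χ) = rank ψ + rank χ + 2 * ivN I + 2 := rfl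
@[simp] lemma rank_release {A : Type} (I : Ivl) (ψ χ : MF A) :
    rank (MF.release I ψ χ) = rank ψ + rank χ + 2 * ivN I + 2 := rfl
section Unfold

variable {A : Type}

lemma memI_xx {x d : ℕ} : memI (x, (x : ℕ∞)) d ↔ d = x := by
  simp only [memI, Nat.cast_le]
  omega

lemma memI_0n {n d : ℕ} : memI (0, (n : ℕ∞)) d ↔ d ≤ n := by
  simp only [memI, Nat.cast_le]
  omega

lemma until_unfold_sat {M : TimedTrace A} (hs : M.strict) (φ ψ : MF A) (n k : ℕ)
    (hk : (k : ℕ∞) < M.lam) :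
    sat M k (.until_ (0, (n : ℕ∞)) φ ψ) ↔
      sat M k ψ ∨ (sat M k φ ∧ ∃ x, 1 ≤ x ∧ x ≤ n ∧
        sat M k (.next (x, (x : ℕ∞)) (.until_ (0, ((n - x : ℕ) : ℕ∞)) φ ψ))) := by
  constructor
  · rintro ⟨j, hkj, hjl, hm, hψ, hφ⟩
    have hmn : M.tau j - M.tau k ≤ n := memI_0n.mp hm
    rcases Nat.eq_or_lt_of_le hkj with rfl | hlt
    · exact Or.inl hψ
    · right
      refine ⟨hφ k le_rfl hlt, ?_⟩
      have hk1j : k + 1 ≤ j := hlt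
      have hk1l : ((k + 1 : ℕ) : ℕ∞) < M.lam := lt_of_le_of_lt (by exact_mod_cast hk1j) hjl
      have hmono : M.tau (k + 1) ≤ M.tau j := tau_mono M (k + 1) j hk1j hjl
      have hkk1 : M.tau k < M.tau (k + 1) := hs k hk1l
      refine ⟨M.tau (k + 1) - M.tau k, by omega, by omega, hk1l, ?_, memI_xx.mpr rfl⟩
      refine ⟨j, hk1j, hjl, memI_0n.mpr (by omega), hψ, ?_⟩
      intro i h1 h2
      exact hφ i (by omega) h2
  · rintro (hψ | ⟨hφk, x, hx1, hxn, hk1l, hU, hmx⟩)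
    · refine ⟨k, le_rfl, hk, memI_0n.mpr (by omega), hψ, ?_⟩
      intro i h1 h2; omega
    · obtain ⟨j, h1j, hjl, hmj, hψj, hφj⟩ := hU
      have hd : M.tau (k + 1) - M.tau k = x := memI_xx.mp hmx
      have hkk1 : M.tau k < M.tau (k + 1) := hs k hk1l
      have hmono : M.tau (k + 1) ≤ M.tau j := tau_mono M _ _ h1j hjl
      have hmj' : M.tau j - M.tau (k + 1) ≤ n - x := memI_0n.mp hmj
      refine ⟨j, by omega, hjl, memI_0n.mpr (by omega), hψj, ?_⟩
      intro i h1 h2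
      rcases Nat.eq_or_lt_of_le h1 with rfl | h
      · exact hφk
      · exact hφj i h h2

lemma release_unfold_sat {M : TimedTrace A} (hs : M.strict) (φ ψ : MF A) (n k : ℕ)
    (hk : (k : ℕ∞) < M.lam) :
    sat M k (.release (0, (n : ℕ∞)) φ ψ) ↔
      sat M k ψ ∧ (sat M k φ ∨ ∀ x, 1 ≤ x → x ≤ n →
        sat M k (.wnext (x, (x : ℕ∞)) (.release (0, ((n - x : ℕ) : ℕ∞)) φ ψ))) := by
  constructor
  · intro h
    have hψk : sat M k ψ := by
      rcases h k le_rfl hk (memI_0n.mpr (by omega)) with h' | ⟨i, h1, h2, _⟩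
      · exact h'
      · omega
    refine ⟨hψk, ?_⟩
    by_cases hφk : sat M k φ
    · exact Or.inl hφk
    · right
      intro x hx1 hxn
      by_cases hl : ((k + 1 : ℕ) : ℕ∞) = M.lam
      · exact Or.inl hl
      · have hk1l : ((k + 1 : ℕ) : ℕ∞) < M.lam := by
          refine lt_of_le_of_ne ?_ hl
          have h2 : (k : ℕ∞) + 1 ≤ M.lam := Order.add_one_le_of_lt hk
          exact_mod_cast h2
        by_cases hd : M.tau (k + 1) - M.tau k = x
        · refine Or.inr (Or.inl ?_)
          intro j hj1 hjl hmj
          have hmono : M.tau (k + 1) ≤ M.tau j := tau_mono M _ _ hj1 hjl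
          have hkk1 : M.tau k < M.tau (k + 1) := hs k hk1l
          have hmj' : M.tau j - M.tau (k + 1) ≤ n - x := memI_0n.mp hmj
          rcases h j (by omega) hjl (memI_0n.mpr (by omega)) with h' | ⟨i, h1, h2, hφi⟩
          · exact Or.inl h'
          · rcases Nat.eq_or_lt_of_le h1 with rfl | hlt
            · exact absurd hφi hφk
            · exact Or.inr ⟨i, hlt, h2, hφi⟩
        · exact Or.inr (Or.inr (fun hm => hd (memI_xx.mp hm)))
  · rintro ⟨hψk, hrest⟩
    intro j hkj hjl hm
    have hmn : M.tau j - M.tau k ≤ n := memI_0n.mp hm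
    rcases Nat.eq_or_lt_of_le hkj with rfl | hlt
    · exact Or.inl hψk
    · rcases hrest with hφk | hall
      · exact Or.inr ⟨k, le_rfl, hlt, hφk⟩
      · have hk1j : k + 1 ≤ j := hlt
        have hk1l : ((k + 1 : ℕ) : ℕ∞) < M.lam := lt_of_le_of_lt (by exact_mod_cast hk1j) hjl
        have hmono : M.tau (k + 1) ≤ M.tau j := tau_mono M _ _ hk1j hjl
        have hkk1 : M.tau k < M.tau (k + 1) := hs k hk1l
        have hd1 : 1 ≤ M.tau (k + 1) - M.tau k := by omega
        have hdn : M.tau (k + 1) - M.tau k ≤ n := by omega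
        rcases hall _ hd1 hdn with hl | hrel | hnm
        · exfalso
          have : ((k + 1 : ℕ) : ℕ∞) < M.lam := lt_of_le_of_lt (by exact_mod_cast hk1j) hjl
          rw [hl] at this
          exact lt_irrefl _ this
        · rcases hrel j hk1j hjl (memI_0n.mpr (by omega)) with h' | ⟨i, h1, h2, hφi⟩
          · exact Or.inl h'
          · exact Or.inr ⟨i, by omega, h2, hφi⟩
        · exact absurd (memI_xx.mpr rfl) hnm

lemma since_unfold_sat {M : TimedTrace A} (hs : M.strict) (φ ψ : MF A) (n k : ℕ)
    (hk : (k : ℕ∞) < M.lam) :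
    sat M k (.since (0, (n : ℕ∞)) φ ψ) ↔
      sat M k ψ ∨ (sat M k φ ∧ ∃ x, 1 ≤ x ∧ x ≤ n ∧
        sat M k (.prev (x, (x : ℕ∞)) (.since (0, ((n - x : ℕ) : ℕ∞)) φ ψ))) := by
  constructor
  · rintro ⟨j, hjk, hm, hψ, hφ⟩
    have hmn : M.tau k - M.tau j ≤ n := memI_0n.mp hm
    rcases Nat.eq_or_lt_of_le hjk with rfl | hlt
    · exact Or.inl hψ
    · right
      refine ⟨hφ k hlt le_rfl, ?_⟩
      have h0k : 0 < k := by omega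
      have hkk : ((k - 1 : ℕ) : ℕ∞) < M.lam :=
        lt_of_le_of_lt (by exact_mod_cast Nat.sub_le k 1) hk
      have hstep : M.tau (k - 1) < M.tau k := by
        have := hs (k - 1) (by rw [show k - 1 + 1 = k by omega]; exact hk)
        rwa [show k - 1 + 1 = k by omega] at this
      have hjm : M.tau j ≤ M.tau (k - 1) := tau_mono M j (k - 1) (by omega) hkk
      refine ⟨M.tau k - M.tau (k - 1), by omega, by omega, h0k, ?_, memI_xx.mpr rfl⟩
      refine ⟨j, by omega, memI_0n.mpr (by omega), hψ, ?_⟩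
      intro i h1 h2
      exact hφ i h1 (by omega)
  · rintro (hψ | ⟨hφk, x, hx1, hxn, h0k, hS, hmx⟩)
    · refine ⟨k, le_rfl, memI_0n.mpr (by omega), hψ, ?_⟩
      intro i h1 h2; omega
    · obtain ⟨j, hjk1, hmj, hψj, hφj⟩ := hS
      have hd : M.tau k - M.tau (k - 1) = x := memI_xx.mp hmx
      have hkk : ((k - 1 : ℕ) : ℕ∞) < M.lam :=
        lt_of_le_of_lt (by exact_mod_cast Nat.sub_le k 1) hk
      have hstep : M.tau (k - 1) < M.tau k := by
        have := hs (k - 1) (by rw [show k - 1 + 1 = k by omega]; exact hk)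
        rwa [show k - 1 + 1 = k by omega] at this
      have hjm : M.tau j ≤ M.tau (k - 1) := tau_mono M j (k - 1) hjk1 hkk
      have hmj' : M.tau (k - 1) - M.tau j ≤ n - x := memI_0n.mp hmj
      refine ⟨j, by omega, memI_0n.mpr (by omega), hψj, ?_⟩
      intro i h1 h2
      rcases Nat.eq_or_lt_of_le h2 with rfl | h
      · exact hφk
      · exact hφj i h1 (by omega)

lemma trigger_unfold_sat {M : TimedTrace A} (hs : M.strict) (φ ψ : MF A) (n k : ℕ)
    (hk : (k : ℕ∞) < M.lam) :
    sat M k (.trigger (0, (n : ℕ∞)) φ ψ) ↔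
      sat M k ψ ∧ (sat M k φ ∨ ∀ x, 1 ≤ x → x ≤ n →
        sat M k (.wprev (x, (x : ℕ∞)) (.trigger (0, ((n - x : ℕ) : ℕ∞)) φ ψ))) := by
  have hkk : ((k - 1 : ℕ) : ℕ∞) < M.lam :=
    lt_of_le_of_lt (by exact_mod_cast Nat.sub_le k 1) hk
  constructor
  · intro h
    have hψk : sat M k ψ := by
      rcases h k le_rfl (memI_0n.mpr (by omega)) with h' | ⟨i, h1, h2, _⟩
      · exact h'
      · omega
    refine ⟨hψk, ?_⟩
    by_cases hφk : sat M k φ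
    · exact Or.inl hφk
    · right
      intro x hx1 hxn
      by_cases h0 : k = 0
      · exact Or.inl h0
      · by_cases hd : M.tau k - M.tau (k - 1) = x
        · refine Or.inr (Or.inl ?_)
          intro j hj1 hmj
          have hjm : M.tau j ≤ M.tau (k - 1) := tau_mono M j (k - 1) hj1 hkk
          have hstep : M.tau (k - 1) < M.tau k := by
            have := hs (k - 1) (by rw [show k - 1 + 1 = k by omega]; exact hk)
            rwa [show k - 1 + 1 = k by omega] at this
          have hmj' : M.tau (k - 1) - M.tau j ≤ n - x := memI_0n.mp hmj
          rcases h j (by omega) (memI_0n.mpr (by omega)) with h' | ⟨i, h1, h2, hφi⟩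
          · exact Or.inl h'
          · rcases Nat.eq_or_lt_of_le h2 with rfl | hlt
            · exact absurd hφi hφk
            · exact Or.inr ⟨i, h1, by omega, hφi⟩
        · exact Or.inr (Or.inr (fun hm => hd (memI_xx.mp hm)))
  · rintro ⟨hψk, hrest⟩
    intro j hjk hm
    have hmn : M.tau k - M.tau j ≤ n := memI_0n.mp hm
    rcases Nat.eq_or_lt_of_le hjk with rfl | hlt
    · exact Or.inl hψk
    · rcases hrest with hφk | hall
      · exact Or.inr ⟨k, hlt, le_rfl, hφk⟩
      · have h0k : 0 < k := by omega
        have hstep : M.tau (k - 1) < M.tau k := by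
          have := hs (k - 1) (by rw [show k - 1 + 1 = k by omega]; exact hk)
          rwa [show k - 1 + 1 = k by omega] at this
        have hjm : M.tau j ≤ M.tau (k - 1) := tau_mono M j (k - 1) (by omega) hkk
        have hd1 : 1 ≤ M.tau k - M.tau (k - 1) := by omega
        have hdn : M.tau k - M.tau (k - 1) ≤ n := by omega
        rcases hall _ hd1 hdn with h0 | htr | hnm
        · omega
        · rcases htr j (by omega) (memI_0n.mpr (by omega)) with h' | ⟨i, h1, h2, hφi⟩
          · exact Or.inl h'
          · exact Or.inr ⟨i, h1, by omega, hφi⟩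
        · exact absurd (memI_xx.mpr rfl) hnm

end Unfold

/-- if `M'` is an MHT model of `{L_φ} ∪ η(φ)` (of finite length
`λ ≥ 1`, strict), then for every `μ ∈ cl(φ)` and every `k < λ` the label atom
agrees with the formula in the associated three-valued interpretation:
`m(k, L_μ) = m(k, μ)`. -/
theorem label_agrees_with_formula {A : Type} (φ : MF A) (hres : Restricted φ)
    (lam : ℕ) (hlam : 1 ≤ lam) (M' : TimedTrace (MF A))
    (hlen : M'.lam = (lam : ℕ∞)) (hstrict : M'.strict)
    (hLφ : sat M' 0 (Lab φ)) (heta : ∀ r ∈ etaCl φ, sat M' 0 r) :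
    ∀ μ : MF A, Cl φ μ → ∀ k : ℕ, (k : ℕ∞) < M'.lam →
      mval M' (Lab μ) k = mval M' (liftF μ) k := by
  have key : ∀ N : ℕ, ∀ μ : MF A, rank μ ≤ N → Cl φ μ → ∀ k : ℕ, (k : ℕ∞) < M'.lam →
      (sat M' k (Lab μ) ↔ sat M' k (liftF μ)) ∧
      (sat M'.tot k (Lab μ) ↔ sat M'.tot k (liftF μ)) := by
    intro N
    induction N using Nat.strong_induction_on with
    | _ N IH =>
      intro μ hrank hcl k hk
      have ihf : ∀ ν : MF A, rank ν < N → Cl φ ν → ∀ k' : ℕ, (k' : ℕ∞) < M'.lam →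
          (sat M' k' (Lab ν) ↔ sat M' k' (liftF ν)) ∧
          (sat M'.tot k' (Lab ν) ↔ sat M'.tot k' (liftF ν)) :=
        fun ν h hc => IH (rank ν) h ν le_rfl hc
      clear IH
      cases μ with
      | bot => exact ⟨Iff.rfl, Iff.rfl⟩
      | atom a => exact ⟨Iff.rfl, Iff.rfl⟩
      | and ψ χ =>
          have hax : sat M' 0 (MF.always (MF.iff_ (Lab (.and ψ χ))
              (.and (Lab ψ) (Lab χ)))) := heta _ ⟨_, hcl, by simp [eta]⟩
          have hiff := sat_iff_elim (sat_always_elim hax k hk)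
          have hr1 : rank ψ < N := by
            have := one_le_rank χ; simp only [rank] at hrank; omega
          have hr2 : rank χ < N := by
            have := one_le_rank ψ; simp only [rank] at hrank; omega
          have ih1 := ihf ψ hr1 (Cl.and₁ hcl) k hk
          have ih2 := ihf χ hr2 (Cl.and₂ hcl) k hk
          exact ⟨hiff.1.trans (and_congr ih1.1 ih2.1),
                 hiff.2.trans (and_congr ih1.2 ih2.2)⟩
      | or ψ χ =>
          have hax : sat M' 0 (MF.always (MF.iff_ (Lab (.or ψ χ))
              (.or (Lab ψ) (Lab χ)))) := heta _ ⟨_, hcl, by simp [eta]⟩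
          have hiff := sat_iff_elim (sat_always_elim hax k hk)
          have hr1 : rank ψ < N := by
            have := one_le_rank χ; simp only [rank] at hrank; omega
          have hr2 : rank χ < N := by
            have := one_le_rank ψ; simp only [rank] at hrank; omega
          have ih1 := ihf ψ hr1 (Cl.or₁ hcl) k hk
          have ih2 := ihf χ hr2 (Cl.or₂ hcl) k hk
          exact ⟨hiff.1.trans (or_congr ih1.1 ih2.1),
                 hiff.2.trans (or_congr ih1.2 ih2.2)⟩
      | imp ψ χ =>
          have hax : sat M' 0 (MF.always (MF.iff_ (Lab (.imp ψ χ))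
              (.imp (Lab ψ) (Lab χ)))) := heta _ ⟨_, hcl, by simp [eta]⟩
          have hiff := sat_iff_elim (sat_always_elim hax k hk)
          have hr1 : rank ψ < N := by
            have := one_le_rank χ; simp only [rank] at hrank; omega
          have hr2 : rank χ < N := by
            have := one_le_rank ψ; simp only [rank] at hrank; omega
          have ih1 := ihf ψ hr1 (Cl.imp₁ hcl) k hk
          have ih2 := ihf χ hr2 (Cl.imp₂ hcl) k hk
          refine ⟨hiff.1.trans ?_, hiff.2.trans ?_⟩
          · exact and_congr (imp_congr ih1.1 ih2.1) (imp_congr ih1.2 ih2.2)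
          · exact and_congr (imp_congr ih1.2 ih2.2) (imp_congr ih1.2 ih2.2)
      | prev I ψ =>
          have hax1 : sat M' 0 (dynR (MF.iff_ (Lab (.prev I ψ)) (.prev I (Lab ψ)))) :=
            heta _ ⟨_, hcl, by simp [eta]⟩
          have hax2 : sat M' 0 (MF.neg (Lab (.prev I ψ))) :=
            heta _ ⟨_, hcl, by simp [eta]⟩
          have hr1 : rank ψ < N := by simp only [rank_prev, rank_wprev, rank_next, rank_wnext] at hrank; omega
          rcases Nat.eq_zero_or_pos k with rfl | hpos
          · exact ⟨iff_of_false (fun h => hax2.1 h) (fun h => absurd h.1 (lt_irrefl 0)),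
                   iff_of_false (fun h => hax2.2 h) (fun h => absurd h.1 (lt_irrefl 0))⟩
          · have hiff := sat_iff_elim (sat_dynR_elim hax1 k hpos hk)
            have hk' : ((k - 1 : ℕ) : ℕ∞) < M'.lam :=
              lt_of_le_of_lt (by exact_mod_cast Nat.sub_le k 1) hk
            have ih := ihf ψ hr1 (Cl.prev hcl) (k - 1) hk'
            refine ⟨hiff.1.trans ?_, hiff.2.trans ?_⟩
            · exact and_congr Iff.rfl (and_congr ih.1 Iff.rfl)
            · exact and_congr Iff.rfl (and_congr ih.2 Iff.rfl)
      | wprev I ψ =>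
          have hax1 : sat M' 0 (dynR (MF.iff_ (Lab (.wprev I ψ)) (.wprev I (Lab ψ)))) :=
            heta _ ⟨_, hcl, by simp [eta]⟩
          have hax2 : sat M' 0 (Lab (.wprev I ψ)) :=
            heta _ ⟨_, hcl, by simp [eta]⟩
          have hr1 : rank ψ < N := by simp only [rank_prev, rank_wprev, rank_next, rank_wnext] at hrank; omega
          rcases Nat.eq_zero_or_pos k with rfl | hpos
          · have h0 : ((0 : ℕ) : ℕ∞) < M'.lam := by
              rw [hlen]; exact_mod_cast hlam
            have htot : sat M'.tot 0 (Lab (.wprev I ψ)) := M'.sub 0 h0 hax2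
            exact ⟨iff_of_true hax2 (Or.inl rfl), iff_of_true htot (Or.inl rfl)⟩
          · have hiff := sat_iff_elim (sat_dynR_elim hax1 k hpos hk)
            have hk' : ((k - 1 : ℕ) : ℕ∞) < M'.lam :=
              lt_of_le_of_lt (by exact_mod_cast Nat.sub_le k 1) hk
            have ih := ihf ψ hr1 (Cl.wprev hcl) (k - 1) hk'
            refine ⟨hiff.1.trans ?_, hiff.2.trans ?_⟩
            · exact or_congr Iff.rfl (or_congr ih.1 Iff.rfl)
            · exact or_congr Iff.rfl (or_congr ih.2 Iff.rfl)
      | next I ψ =>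
          have hax1 : sat M' 0 (dynR (.imp (.prev I MF.top)
              (MF.iff_ (prevN (Lab (.next I ψ))) (Lab ψ)))) :=
            heta _ ⟨_, hcl, by simp [eta]⟩
          have hax2 : sat M' 0 (dynR (.imp (MF.neg (.prev I MF.top))
              (MF.neg (prevN (Lab (.next I ψ)))))) :=
            heta _ ⟨_, hcl, by simp [eta]⟩
          have hax3 : sat M' 0 (MF.always (.imp MF.final (MF.neg (Lab (.next I ψ))))) :=
            heta _ ⟨_, hcl, by simp [eta]⟩
          have hr1 : rank ψ < N := by
            simp only [rank_prev, rank_wprev, rank_next, rank_wnext] at hrank; omega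
          have hkn : k < lam := by rw [hlen] at hk; exact_mod_cast hk
          rcases Nat.lt_or_ge (k + 1) lam with hlt | hge
          · have hk1l : ((k + 1 : ℕ) : ℕ∞) < M'.lam := by rw [hlen]; exact_mod_cast hlt
            by_cases hmem : memI I (M'.tau (k + 1) - M'.tau k)
            · have hA1 := sat_dynR_elim hax1 (k + 1) (by omega) hk1l
              have hprevtop : sat M' (k + 1) (.prev I MF.top) :=
                ⟨by omega, sat_top _ _, hmem⟩
              have hiff := sat_iff_elim (hA1.1 hprevtop)
              have ih := ihf ψ hr1 (Cl.next hcl) (k + 1) hk1l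
              have e1 : sat M' (k + 1) (prevN (Lab (.next I ψ))) ↔
                  sat M' k (Lab (.next I ψ)) :=
                ⟨fun h => h.2.1, fun h => ⟨by omega, h, ⟨Nat.zero_le _, le_top⟩⟩⟩
              have e2 : sat M'.tot (k + 1) (prevN (Lab (.next I ψ))) ↔
                  sat M'.tot k (Lab (.next I ψ)) :=
                ⟨fun h => h.2.1, fun h => ⟨by omega, h, ⟨Nat.zero_le _, le_top⟩⟩⟩
              constructor
              · refine ((e1.symm.trans hiff.1).trans ih.1).trans ?_
                exact ⟨fun h => ⟨hk1l, h, hmem⟩, fun h => h.2.1⟩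
              · refine ((e2.symm.trans hiff.2).trans ih.2).trans ?_
                exact ⟨fun h => ⟨hk1l, h, hmem⟩, fun h => h.2.1⟩
            · have hA2 := sat_dynR_elim hax2 (k + 1) (by omega) hk1l
              have hnp : sat M' (k + 1) (MF.neg (.prev I MF.top)) :=
                ⟨fun h => absurd h.2.2 hmem, fun h => absurd h.2.2 hmem⟩
              have hneg := hA2.1 hnp
              constructor
              · exact iff_of_false
                  (fun h => hneg.1 ⟨by omega, h, ⟨Nat.zero_le _, le_top⟩⟩)
                  (fun h => hmem h.2.2)
              · exact iff_of_false
                  (fun h => hneg.2 ⟨by omega, h, ⟨Nat.zero_le _, le_top⟩⟩)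
                  (fun h => hmem h.2.2)
          · have heq : ((k + 1 : ℕ) : ℕ∞) = M'.lam := by
              rw [hlen]; exact_mod_cast (by omega : k + 1 = lam)
            have hA3 := sat_always_elim hax3 k hk
            have hfin : sat M' k (MF.final : MF (MF A)) :=
              ⟨fun h => absurd h.1 (by rw [heq]; exact lt_irrefl _),
               fun h => absurd h.1 (by rw [heq]; exact lt_irrefl _)⟩
            have hneg := hA3.1 hfin
            constructor
            · exact iff_of_false (fun h => hneg.1 h)
                (fun h => absurd h.1 (by rw [heq]; exact lt_irrefl _))
            · exact iff_of_false (fun h => hneg.2 h)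
                (fun h => absurd h.1 (by rw [heq]; exact lt_irrefl _))
      | wnext I ψ =>
          have hax1 : sat M' 0 (dynR (.imp (.prev I MF.top)
              (MF.iff_ (prevN (Lab (.wnext I ψ))) (Lab ψ)))) :=
            heta _ ⟨_, hcl, by simp [eta]⟩
          have hax2 : sat M' 0 (dynR (.imp (MF.neg (.prev I MF.top))
              (prevN (Lab (.wnext I ψ))))) :=
            heta _ ⟨_, hcl, by simp [eta]⟩
          have hax3 : sat M' 0 (MF.always (.imp MF.final (Lab (.wnext I ψ)))) :=
            heta _ ⟨_, hcl, by simp [eta]⟩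
          have hr1 : rank ψ < N := by
            simp only [rank_prev, rank_wprev, rank_next, rank_wnext] at hrank; omega
          have hkn : k < lam := by rw [hlen] at hk; exact_mod_cast hk
          rcases Nat.lt_or_ge (k + 1) lam with hlt | hge
          · have hk1l : ((k + 1 : ℕ) : ℕ∞) < M'.lam := by rw [hlen]; exact_mod_cast hlt
            have hne : ((k + 1 : ℕ) : ℕ∞) ≠ M'.lam := ne_of_lt hk1l
            by_cases hmem : memI I (M'.tau (k + 1) - M'.tau k)
            · have hA1 := sat_dynR_elim hax1 (k + 1) (by omega) hk1l
              have hprevtop : sat M' (k + 1) (.prev I MF.top) :=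
                ⟨by omega, sat_top _ _, hmem⟩
              have hiff := sat_iff_elim (hA1.1 hprevtop)
              have ih := ihf ψ hr1 (Cl.wnext hcl) (k + 1) hk1l
              have e1 : sat M' (k + 1) (prevN (Lab (.wnext I ψ))) ↔
                  sat M' k (Lab (.wnext I ψ)) :=
                ⟨fun h => h.2.1, fun h => ⟨by omega, h, ⟨Nat.zero_le _, le_top⟩⟩⟩
              have e2 : sat M'.tot (k + 1) (prevN (Lab (.wnext I ψ))) ↔
                  sat M'.tot k (Lab (.wnext I ψ)) :=
                ⟨fun h => h.2.1, fun h => ⟨by omega, h, ⟨Nat.zero_le _, le_top⟩⟩⟩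
              constructor
              · refine ((e1.symm.trans hiff.1).trans ih.1).trans ?_
                refine ⟨fun h => Or.inr (Or.inl h), ?_⟩
                rintro (h | h | h)
                · exact absurd h hne
                · exact h
                · exact absurd hmem h
              · refine ((e2.symm.trans hiff.2).trans ih.2).trans ?_
                refine ⟨fun h => Or.inr (Or.inl h), ?_⟩
                rintro (h | h | h)
                · exact absurd h hne
                · exact h
                · exact absurd hmem h
            · have hA2 := sat_dynR_elim hax2 (k + 1) (by omega) hk1l
              have hnp : sat M' (k + 1) (MF.neg (.prev I MF.top)) :=
                ⟨fun h => absurd h.2.2 hmem, fun h => absurd h.2.2 hmem⟩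
              have hnpt : sat M'.tot (k + 1) (MF.neg (.prev I MF.top)) :=
                ⟨fun h => absurd h.2.2 hmem, fun h => absurd h.2.2 hmem⟩
              constructor
              · exact iff_of_true (hA2.1 hnp).2.1 (Or.inr (Or.inr hmem))
              · exact iff_of_true (hA2.2 hnpt).2.1 (Or.inr (Or.inr hmem))
          · have heq : ((k + 1 : ℕ) : ℕ∞) = M'.lam := by
              rw [hlen]; exact_mod_cast (by omega : k + 1 = lam)
            have hA3 := sat_always_elim hax3 k hk
            have hfin : sat M' k (MF.final : MF (MF A)) :=
              ⟨fun h => absurd h.1 (by rw [heq]; exact lt_irrefl _),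
               fun h => absurd h.1 (by rw [heq]; exact lt_irrefl _)⟩
            have hfint : sat M'.tot k (MF.final : MF (MF A)) :=
              ⟨fun h => absurd h.1 (by rw [heq]; exact lt_irrefl _),
               fun h => absurd h.1 (by rw [heq]; exact lt_irrefl _)⟩
            constructor
            · exact iff_of_true (hA3.1 hfin) (Or.inl heq)
            · exact iff_of_true (hA3.2 hfint) (Or.inl heq)
      | since I ψ χ =>
          obtain ⟨a, b⟩ := I
          obtain ⟨ha, hb, -, -⟩ := Cl_restricted hres _ hcl
          have hI : (a, b) = ((0 : ℕ), ((b.toNat : ℕ) : ℕ∞)) := by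
            have h1 : a = 0 := ha
            have h2 : ((b.toNat : ℕ) : ℕ∞) = b := ENat.coe_toNat hb
            rw [h1, h2]
          rw [hI] at hcl hrank ⊢
          set n := b.toNat with hn
          clear_value n
          have hivn : ivN ((0 : ℕ), (n : ℕ∞)) = n := by simp [ivN]
          have hrk : rank ψ + rank χ + 2 * n + 2 ≤ N := by
            rw [rank_since, hivn] at hrank; exact hrank
          have hr1 : rank ψ < N := by have := one_le_rank χ; omega
          have hr2 : rank χ < N := by have := one_le_rank ψ; omega
          have hax : sat M' 0 (MF.always (MF.iff_ (Lab (.since ((0:ℕ), (n:ℕ∞)) ψ χ))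
              (.or (Lab χ) (.and (Lab ψ)
                (bigOr (unfoldLabs (ivN ((0:ℕ), (n:ℕ∞)))
                  (fun J K => .prev J (.since K ψ χ)))))))) :=
            heta _ ⟨_, hcl, by simp [eta]⟩
          rw [hivn] at hax
          have hiff := sat_iff_elim (sat_always_elim hax k hk)
          have ihψ := ihf ψ hr1 (Cl.since₁ hcl) k hk
          have ihχ := ihf χ hr2 (Cl.since₂ hcl) k hk
          have ihx : ∀ x, 1 ≤ x → x ≤ n → ∀ k' : ℕ, (k' : ℕ∞) < M'.lam →
              (sat M' k' (Lab (.prev (x, (x:ℕ∞)) (.since ((0:ℕ), ((n-x:ℕ):ℕ∞)) ψ χ))) ↔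
               sat M' k' (.prev (x, (x:ℕ∞)) (.since ((0:ℕ), ((n-x:ℕ):ℕ∞)) (liftF ψ) (liftF χ)))) ∧
              (sat M'.tot k' (Lab (.prev (x, (x:ℕ∞)) (.since ((0:ℕ), ((n-x:ℕ):ℕ∞)) ψ χ))) ↔
               sat M'.tot k' (.prev (x, (x:ℕ∞)) (.since ((0:ℕ), ((n-x:ℕ):ℕ∞)) (liftF ψ) (liftF χ)))) := by
            intro x h1 h2
            have hrx : rank (MF.prev (x, (x:ℕ∞)) (.since ((0:ℕ), ((n-x:ℕ):ℕ∞)) ψ χ)) < N := by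
              rw [rank_prev, rank_since]
              simp only [ivN, ENat.toNat_coe]
              omega
            exact ihf _ hrx (Cl.since_unfold hcl h1 h2)
          have hbig : ∀ MM : TimedTrace (MF A), ∀ k' : ℕ,
              sat MM k' (bigOr (unfoldLabs n (fun J K => .prev J (.since K ψ χ)))) ↔
              ∃ x, 1 ≤ x ∧ x ≤ n ∧
                sat MM k' (Lab (.prev (x, (x:ℕ∞)) (.since ((0:ℕ), ((n-x:ℕ):ℕ∞)) ψ χ))) := by
            intro MM k'
            rw [sat_bigOr]
            constructor
            · rintro ⟨r, hr, hs⟩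
              obtain ⟨x, h1, h2, rfl⟩ := mem_unfoldLabs.mp hr
              exact ⟨x, h1, h2, hs⟩
            · rintro ⟨x, h1, h2, hs⟩
              exact ⟨_, mem_unfoldLabs.mpr ⟨x, h1, h2, rfl⟩, hs⟩
          constructor
          · refine hiff.1.trans ?_
            have hR := since_unfold_sat hstrict (liftF ψ) (liftF χ) n k hk
            refine Iff.trans ?_ hR.symm
            refine or_congr ihχ.1 (and_congr ihψ.1 ?_)
            refine (hbig M' k).trans ?_
            exact exists_congr fun x =>
              ⟨fun ⟨h1, h2, hp⟩ => ⟨h1, h2, (ihx x h1 h2 k hk).1.mp hp⟩,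
               fun ⟨h1, h2, hq⟩ => ⟨h1, h2, (ihx x h1 h2 k hk).1.mpr hq⟩⟩
          · refine hiff.2.trans ?_
            have hR := since_unfold_sat (tot_strict hstrict) (liftF ψ) (liftF χ) n k hk
            refine Iff.trans ?_ hR.symm
            refine or_congr ihχ.2 (and_congr ihψ.2 ?_)
            refine (hbig M'.tot k).trans ?_
            exact exists_congr fun x =>
              ⟨fun ⟨h1, h2, hp⟩ => ⟨h1, h2, (ihx x h1 h2 k hk).2.mp hp⟩,
               fun ⟨h1, h2, hq⟩ => ⟨h1, h2, (ihx x h1 h2 k hk).2.mpr hq⟩⟩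
      | trigger I ψ χ =>
          obtain ⟨a, b⟩ := I
          obtain ⟨ha, hb, -, -⟩ := Cl_restricted hres _ hcl
          have hI : (a, b) = ((0 : ℕ), ((b.toNat : ℕ) : ℕ∞)) := by
            have h1 : a = 0 := ha
            have h2 : ((b.toNat : ℕ) : ℕ∞) = b := ENat.coe_toNat hb
            rw [h1, h2]
          rw [hI] at hcl hrank ⊢
          set n := b.toNat with hn
          clear_value n
          have hivn : ivN ((0 : ℕ), (n : ℕ∞)) = n := by simp [ivN]
          have hrk : rank ψ + rank χ + 2 * n + 2 ≤ N := by
            rw [rank_trigger, hivn] at hrank; exact hrank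
          have hr1 : rank ψ < N := by have := one_le_rank χ; omega
          have hr2 : rank χ < N := by have := one_le_rank ψ; omega
          have hax : sat M' 0 (MF.always (MF.iff_ (Lab (.trigger ((0:ℕ), (n:ℕ∞)) ψ χ))
              (.and (Lab χ) (.or (Lab ψ)
                (bigAnd (unfoldLabs (ivN ((0:ℕ), (n:ℕ∞)))
                  (fun J K => .wprev J (.trigger K ψ χ)))))))) :=
            heta _ ⟨_, hcl, by simp [eta]⟩
          rw [hivn] at hax
          have hiff := sat_iff_elim (sat_always_elim hax k hk)
          have ihψ := ihf ψ hr1 (Cl.trigger₁ hcl) k hk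
          have ihχ := ihf χ hr2 (Cl.trigger₂ hcl) k hk
          have ihx : ∀ x, 1 ≤ x → x ≤ n → ∀ k' : ℕ, (k' : ℕ∞) < M'.lam →
              (sat M' k' (Lab (.wprev (x, (x:ℕ∞)) (.trigger ((0:ℕ), ((n-x:ℕ):ℕ∞)) ψ χ))) ↔
               sat M' k' (.wprev (x, (x:ℕ∞)) (.trigger ((0:ℕ), ((n-x:ℕ):ℕ∞)) (liftF ψ) (liftF χ)))) ∧
              (sat M'.tot k' (Lab (.wprev (x, (x:ℕ∞)) (.trigger ((0:ℕ), ((n-x:ℕ):ℕ∞)) ψ χ))) ↔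
               sat M'.tot k' (.wprev (x, (x:ℕ∞)) (.trigger ((0:ℕ), ((n-x:ℕ):ℕ∞)) (liftF ψ) (liftF χ)))) := by
            intro x h1 h2
            have hrx : rank (MF.wprev (x, (x:ℕ∞)) (.trigger ((0:ℕ), ((n-x:ℕ):ℕ∞)) ψ χ)) < N := by
              rw [rank_wprev, rank_trigger]
              simp only [ivN, ENat.toNat_coe]
              omega
            exact ihf _ hrx (Cl.trigger_unfold hcl h1 h2)
          have hbig : ∀ MM : TimedTrace (MF A), ∀ k' : ℕ,
              sat MM k' (bigAnd (unfoldLabs n (fun J K => .wprev J (.trigger K ψ χ)))) ↔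
              ∀ x, 1 ≤ x → x ≤ n →
                sat MM k' (Lab (.wprev (x, (x:ℕ∞)) (.trigger ((0:ℕ), ((n-x:ℕ):ℕ∞)) ψ χ))) := by
            intro MM k'
            rw [sat_bigAnd]
            constructor
            · intro h x h1 h2
              exact h _ (mem_unfoldLabs.mpr ⟨x, h1, h2, rfl⟩)
            · intro h r hr
              obtain ⟨x, h1, h2, rfl⟩ := mem_unfoldLabs.mp hr
              exact h x h1 h2
          constructor
          · refine hiff.1.trans ?_
            have hR := trigger_unfold_sat hstrict (liftF ψ) (liftF χ) n k hk
            refine Iff.trans ?_ hR.symm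
            refine and_congr ihχ.1 (or_congr ihψ.1 ?_)
            refine (hbig M' k).trans ?_
            exact ⟨fun h x h1 h2 => (ihx x h1 h2 k hk).1.mp (h x h1 h2),
                   fun h x h1 h2 => (ihx x h1 h2 k hk).1.mpr (h x h1 h2)⟩
          · refine hiff.2.trans ?_
            have hR := trigger_unfold_sat (tot_strict hstrict) (liftF ψ) (liftF χ) n k hk
            refine Iff.trans ?_ hR.symm
            refine and_congr ihχ.2 (or_congr ihψ.2 ?_)
            refine (hbig M'.tot k).trans ?_
            exact ⟨fun h x h1 h2 => (ihx x h1 h2 k hk).2.mp (h x h1 h2),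
                   fun h x h1 h2 => (ihx x h1 h2 k hk).2.mpr (h x h1 h2)⟩
      | until_ I ψ χ =>
          obtain ⟨a, b⟩ := I
          obtain ⟨ha, hb, -, -⟩ := Cl_restricted hres _ hcl
          have hI : (a, b) = ((0 : ℕ), ((b.toNat : ℕ) : ℕ∞)) := by
            have h1 : a = 0 := ha
            have h2 : ((b.toNat : ℕ) : ℕ∞) = b := ENat.coe_toNat hb
            rw [h1, h2]
          rw [hI] at hcl hrank ⊢
          set n := b.toNat with hn
          clear_value n
          have hivn : ivN ((0 : ℕ), (n : ℕ∞)) = n := by simp [ivN]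
          have hrk : rank ψ + rank χ + 2 * n + 2 ≤ N := by
            rw [rank_until, hivn] at hrank; exact hrank
          have hr1 : rank ψ < N := by have := one_le_rank χ; omega
          have hr2 : rank χ < N := by have := one_le_rank ψ; omega
          have hax : sat M' 0 (MF.always (MF.iff_ (Lab (.until_ ((0:ℕ), (n:ℕ∞)) ψ χ))
              (.or (Lab χ) (.and (Lab ψ)
                (bigOr (unfoldLabs (ivN ((0:ℕ), (n:ℕ∞)))
                  (fun J K => .next J (.until_ K ψ χ)))))))) :=
            heta _ ⟨_, hcl, by simp [eta]⟩
          rw [hivn] at hax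
          have hiff := sat_iff_elim (sat_always_elim hax k hk)
          have ihψ := ihf ψ hr1 (Cl.until₁ hcl) k hk
          have ihχ := ihf χ hr2 (Cl.until₂ hcl) k hk
          have ihx : ∀ x, 1 ≤ x → x ≤ n → ∀ k' : ℕ, (k' : ℕ∞) < M'.lam →
              (sat M' k' (Lab (.next (x, (x:ℕ∞)) (.until_ ((0:ℕ), ((n-x:ℕ):ℕ∞)) ψ χ))) ↔
               sat M' k' (.next (x, (x:ℕ∞)) (.until_ ((0:ℕ), ((n-x:ℕ):ℕ∞)) (liftF ψ) (liftF χ)))) ∧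
              (sat M'.tot k' (Lab (.next (x, (x:ℕ∞)) (.until_ ((0:ℕ), ((n-x:ℕ):ℕ∞)) ψ χ))) ↔
               sat M'.tot k' (.next (x, (x:ℕ∞)) (.until_ ((0:ℕ), ((n-x:ℕ):ℕ∞)) (liftF ψ) (liftF χ)))) := by
            intro x h1 h2
            have hrx : rank (MF.next (x, (x:ℕ∞)) (.until_ ((0:ℕ), ((n-x:ℕ):ℕ∞)) ψ χ)) < N := by
              rw [rank_next, rank_until]
              simp only [ivN, ENat.toNat_coe]
              omega
            exact ihf _ hrx (Cl.until_unfold hcl h1 h2)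
          have hbig : ∀ MM : TimedTrace (MF A), ∀ k' : ℕ,
              sat MM k' (bigOr (unfoldLabs n (fun J K => .next J (.until_ K ψ χ)))) ↔
              ∃ x, 1 ≤ x ∧ x ≤ n ∧
                sat MM k' (Lab (.next (x, (x:ℕ∞)) (.until_ ((0:ℕ), ((n-x:ℕ):ℕ∞)) ψ χ))) := by
            intro MM k'
            rw [sat_bigOr]
            constructor
            · rintro ⟨r, hr, hs⟩
              obtain ⟨x, h1, h2, rfl⟩ := mem_unfoldLabs.mp hr
              exact ⟨x, h1, h2, hs⟩
            · rintro ⟨x, h1, h2, hs⟩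
              exact ⟨_, mem_unfoldLabs.mpr ⟨x, h1, h2, rfl⟩, hs⟩
          constructor
          · refine hiff.1.trans ?_
            have hR := until_unfold_sat hstrict (liftF ψ) (liftF χ) n k hk
            refine Iff.trans ?_ hR.symm
            refine or_congr ihχ.1 (and_congr ihψ.1 ?_)
            refine (hbig M' k).trans ?_
            exact exists_congr fun x =>
              ⟨fun ⟨h1, h2, hp⟩ => ⟨h1, h2, (ihx x h1 h2 k hk).1.mp hp⟩,
               fun ⟨h1, h2, hq⟩ => ⟨h1, h2, (ihx x h1 h2 k hk).1.mpr hq⟩⟩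
          · refine hiff.2.trans ?_
            have hR := until_unfold_sat (tot_strict hstrict) (liftF ψ) (liftF χ) n k hk
            refine Iff.trans ?_ hR.symm
            refine or_congr ihχ.2 (and_congr ihψ.2 ?_)
            refine (hbig M'.tot k).trans ?_
            exact exists_congr fun x =>
              ⟨fun ⟨h1, h2, hp⟩ => ⟨h1, h2, (ihx x h1 h2 k hk).2.mp hp⟩,
               fun ⟨h1, h2, hq⟩ => ⟨h1, h2, (ihx x h1 h2 k hk).2.mpr hq⟩⟩
      | release I ψ χ =>
          obtain ⟨a, b⟩ := I
          obtain ⟨ha, hb, -, -⟩ := Cl_restricted hres _ hcl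
          have hI : (a, b) = ((0 : ℕ), ((b.toNat : ℕ) : ℕ∞)) := by
            have h1 : a = 0 := ha
            have h2 : ((b.toNat : ℕ) : ℕ∞) = b := ENat.coe_toNat hb
            rw [h1, h2]
          rw [hI] at hcl hrank ⊢
          set n := b.toNat with hn
          clear_value n
          have hivn : ivN ((0 : ℕ), (n : ℕ∞)) = n := by simp [ivN]
          have hrk : rank ψ + rank χ + 2 * n + 2 ≤ N := by
            rw [rank_release, hivn] at hrank; exact hrank
          have hr1 : rank ψ < N := by have := one_le_rank χ; omega
          have hr2 : rank χ < N := by have := one_le_rank ψ; omega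
          have hax : sat M' 0 (MF.always (MF.iff_ (Lab (.release ((0:ℕ), (n:ℕ∞)) ψ χ))
              (.and (Lab χ) (.or (Lab ψ)
                (bigAnd (unfoldLabs (ivN ((0:ℕ), (n:ℕ∞)))
                  (fun J K => .wnext J (.release K ψ χ)))))))) :=
            heta _ ⟨_, hcl, by simp [eta]⟩
          rw [hivn] at hax
          have hiff := sat_iff_elim (sat_always_elim hax k hk)
          have ihψ := ihf ψ hr1 (Cl.release₁ hcl) k hk
          have ihχ := ihf χ hr2 (Cl.release₂ hcl) k hk
          have ihx : ∀ x, 1 ≤ x → x ≤ n → ∀ k' : ℕ, (k' : ℕ∞) < M'.lam →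
              (sat M' k' (Lab (.wnext (x, (x:ℕ∞)) (.release ((0:ℕ), ((n-x:ℕ):ℕ∞)) ψ χ))) ↔
               sat M' k' (.wnext (x, (x:ℕ∞)) (.release ((0:ℕ), ((n-x:ℕ):ℕ∞)) (liftF ψ) (liftF χ)))) ∧
              (sat M'.tot k' (Lab (.wnext (x, (x:ℕ∞)) (.release ((0:ℕ), ((n-x:ℕ):ℕ∞)) ψ χ))) ↔
               sat M'.tot k' (.wnext (x, (x:ℕ∞)) (.release ((0:ℕ), ((n-x:ℕ):ℕ∞)) (liftF ψ) (liftF χ)))) := by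
            intro x h1 h2
            have hrx : rank (MF.wnext (x, (x:ℕ∞)) (.release ((0:ℕ), ((n-x:ℕ):ℕ∞)) ψ χ)) < N := by
              rw [rank_wnext, rank_release]
              simp only [ivN, ENat.toNat_coe]
              omega
            exact ihf _ hrx (Cl.release_unfold hcl h1 h2)
          have hbig : ∀ MM : TimedTrace (MF A), ∀ k' : ℕ,
              sat MM k' (bigAnd (unfoldLabs n (fun J K => .wnext J (.release K ψ χ)))) ↔
              ∀ x, 1 ≤ x → x ≤ n →
                sat MM k' (Lab (.wnext (x, (x:ℕ∞)) (.release ((0:ℕ), ((n-x:ℕ):ℕ∞)) ψ χ))) := by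
            intro MM k'
            rw [sat_bigAnd]
            constructor
            · intro h x h1 h2
              exact h _ (mem_unfoldLabs.mpr ⟨x, h1, h2, rfl⟩)
            · intro h r hr
              obtain ⟨x, h1, h2, rfl⟩ := mem_unfoldLabs.mp hr
              exact h x h1 h2
          constructor
          · refine hiff.1.trans ?_
            have hR := release_unfold_sat hstrict (liftF ψ) (liftF χ) n k hk
            refine Iff.trans ?_ hR.symm
            refine and_congr ihχ.1 (or_congr ihψ.1 ?_)
            refine (hbig M' k).trans ?_
            exact ⟨fun h x h1 h2 => (ihx x h1 h2 k hk).1.mp (h x h1 h2),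
                   fun h x h1 h2 => (ihx x h1 h2 k hk).1.mpr (h x h1 h2)⟩
          · refine hiff.2.trans ?_
            have hR := release_unfold_sat (tot_strict hstrict) (liftF ψ) (liftF χ) n k hk
            refine Iff.trans ?_ hR.symm
            refine and_congr ihχ.2 (or_congr ihψ.2 ?_)
            refine (hbig M'.tot k).trans ?_
            exact ⟨fun h x h1 h2 => (ihx x h1 h2 k hk).2.mp (h x h1 h2),
                   fun h x h1 h2 => (ihx x h1 h2 k hk).2.mpr (h x h1 h2)⟩
  intro μ hcl k hk
  have h := key (rank μ) μ le_rfl hcl k hk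
  exact mval_eq_of_sat_iffs hk h.1 h.2
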